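/- arXiv:1201.0872 — 6 statements merged into one kernel-verified Lean document; each statement's English description precedes it below -/
import Mathlib

section
/- Let f : (0,∞)×(−∞,0] → [0,∞) be measurable with ∫₀^∞∫_{−∞}^0 f(x,y)² dx dy < ∞. Then for every n > 0, I₁(n,f) ≤ (37/8) ∫₀^∞∫_{−∞}^0 f(x,y)² dx dy. -/
open MeasureTheory ProbabilityTheory Filter Topology

noncomputable section

/-- The kernel `h(t,x,y) = ((t+y) ∧ 0 + x)₊ − (y ∧ 0 + x)₊`. -/
def hker (t x y : ℝ) : ℝ := max (min (t + y) 0 + x) 0 - max (min y 0 + x) 0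

/-- The kernel `g_s(t,x,y) = h(t+s,x,y) − h(s,x,y)`. -/
def gker (s t x y : ℝ) : ℝ := hker (t + s) x y - hker s x y

/-- The constant `C_H = H(2H−1)(1−H)(3−2H)`. -/
def CH (H : ℝ) : ℝ := H * (2 * H - 1) * (1 - H) * (3 - 2 * H)

/-- A Poisson random measure with intensity `β` times Lebesgue measure on a region
`D ⊆ ℝ × ℝ`: for measurable `A ⊆ D` of finite Lebesgue measure, `M · A` is a Poisson
random variable with mean `β · volume A`; counts over disjoint sets are independent;
and `M ω` is finitely additive on disjoint sets of finite measure. -/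
structure IsPoissonRandomMeasure {Ω : Type*} [MeasureSpace Ω]
    (β : ℝ) (D : Set (ℝ × ℝ)) (M : Ω → Set (ℝ × ℝ) → ℕ) : Prop where
  measurable_eval : ∀ A : Set (ℝ × ℝ), MeasurableSet A → Measurable fun ω => M ω A
  law : ∀ A : Set (ℝ × ℝ), MeasurableSet A → A ⊆ D → volume A ≠ ⊤ →
    Measure.map (fun ω => M ω A) ℙ = poissonMeasure ((β * (volume A).toReal).toNNReal)
  indep : ∀ {ι : Type} (A : ι → Set (ℝ × ℝ)), (∀ i, MeasurableSet (A i)) →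
    (∀ i, A i ⊆ D) → (∀ i, volume (A i) ≠ ⊤) → Pairwise (Function.onFun Disjoint A) →
    iIndepFun (fun i ω => M ω (A i)) ℙ
  add : ∀ (ω : Ω) (A B : Set (ℝ × ℝ)), MeasurableSet A → MeasurableSet B →
    volume A ≠ ⊤ → volume B ≠ ⊤ → Disjoint A B → M ω (A ∪ B) = M ω A + M ω B

/-- A two-parameter Poisson process with intensity `β` on `ℝ₊ × ℝ₋`: a jointly
measurable `ℕ`-valued random field with `N ω x y = M ω ([0,x] × [y,0])` for a Poisson
random measure `M` with intensity `β` times Lebesgue measure on `ℝ₊ × ℝ₋`. -/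
def IsTwoParamPoisson {Ω : Type*} [MeasureSpace Ω] (β : ℝ)
    (N : Ω → ℝ → ℝ → ℕ) : Prop :=
  Measurable (fun p : Ω × ℝ × ℝ => N p.1 p.2.1 p.2.2) ∧
  ∃ M : Ω → Set (ℝ × ℝ) → ℕ,
    IsPoissonRandomMeasure β (Set.Ici 0 ×ˢ Set.Iic 0) M ∧
    ∀ ω x y, N ω x y = M ω (Set.Icc 0 x ×ˢ Set.Icc y 0)

/-- A two-parameter Poisson process with intensity `β` on `ℝ × ℝ`: a jointly measurable
`ℕ`-valued random field with `N ω x y = M ω (R(x,y))` where `R(x,y)` is the closed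
rectangle with opposite corners `(0,0)` and `(x,y)`, for a Poisson random measure `M`
with intensity `β` times Lebesgue measure. -/
def IsTwoParamPoissonPlane {Ω : Type*} [MeasureSpace Ω] (β : ℝ)
    (N : Ω → ℝ → ℝ → ℕ) : Prop :=
  Measurable (fun p : Ω × ℝ × ℝ => N p.1 p.2.1 p.2.2) ∧
  ∃ M : Ω → Set (ℝ × ℝ) → ℕ,
    IsPoissonRandomMeasure β Set.univ M ∧
    ∀ ω x y, N ω x y = M ω (Set.uIcc 0 x ×ˢ Set.uIcc 0 y)

/-- `I₁(n,f)`, the integral over `Ω₁ = {0 < x₁ ≤ x₂, y₂ ≤ y₁ ≤ 0}`;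
here `p.1 = (x₁, y₁)` and `p.2 = (x₂, y₂)`. -/
def I1 (n : ℝ) (f : ℝ → ℝ → ℝ) : ℝ :=
  n ^ 2 * ∫ p in {p : (ℝ × ℝ) × ℝ × ℝ |
      0 < p.1.1 ∧ p.1.1 ≤ p.2.1 ∧ p.2.2 ≤ p.1.2 ∧ p.1.2 ≤ 0},
    f p.1.1 p.1.2 * f p.2.1 p.2.2 * Real.sqrt (p.1.1 * |p.1.2|) *
      Real.sqrt (p.2.1 * |p.2.2|) * Real.exp (-2 * n * (p.1.1 * p.1.2 - p.2.1 * p.2.2))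

/-- `I₂(n,f)`, the integral over `Ω₂ = {0 < x₁ ≤ x₂, y₁ < y₂ ≤ 0}`;
here `p.1 = (x₁, y₁)` and `p.2 = (x₂, y₂)`. -/
def I2 (n : ℝ) (f : ℝ → ℝ → ℝ) : ℝ :=
  n ^ 2 * ∫ p in {p : (ℝ × ℝ) × ℝ × ℝ |
      0 < p.1.1 ∧ p.1.1 ≤ p.2.1 ∧ p.1.2 < p.2.2 ∧ p.2.2 ≤ 0},
    f p.1.1 p.1.2 * f p.2.1 p.2.2 * Real.sqrt (p.1.1 * |p.1.2|) *
      Real.sqrt (p.2.1 * |p.2.2|) *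
      Real.exp (-2 * n * (p.1.1 * (p.2.2 - p.1.2) - (p.2.1 - p.1.1) * p.2.2))

/-- `F_{n,f}(x,y) = √(x|y|) n² ∫_x^∞ ∫_y^0 f(x₂,y₂) √(x₂|y₂|)
e^{−2n[x(y₂−y)−(x₂−x)y₂]} dx₂ dy₂`. -/
def Fnf (n : ℝ) (f : ℝ → ℝ → ℝ) (x y : ℝ) : ℝ :=
  Real.sqrt (x * |y|) * n ^ 2 *
    ∫ q in Set.Ioi x ×ˢ Set.Ioc y 0,
      f q.1 q.2 * Real.sqrt (q.1 * |q.2|) *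
        Real.exp (-2 * n * (x * (q.2 - y) - (q.1 - x) * q.2))

end

/-!
Since `|f p * f q| ≤ (f p ^ 2 + f q ^ 2) / 2`, the Schur test reduces the claim to uniform
bounds on the row and column integrals of the kernel `√(x₁|y₁|) √(x₂|y₂|) e^{-2n(x₁y₁ - x₂y₂)}`
over `Ω₁`. After the AM-GM bound `√(x₁|y₁| x₂|y₂|) ≤ (|y₁| x₂ + x₁ |y₂|) / 2` each of them is an
explicit iterated exponential integral, at most `1 / (4n²)`, so in fact `I₁(n, f) ≤ ¼ ∫ f²`.
-/

open Set Real

theorem ENNReal.mul_le_sq_div_two_add_sq_div_two (a b : ENNReal) :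
    a * b ≤ a ^ 2 / 2 + b ^ 2 / 2 := by
  simpa [ENNReal.rpow_two] using ENNReal.young_inequality a b Real.HolderConjugate.two_two

section SchurTest

variable {α : Type*} [MeasurableSpace α] {μ : Measure α} [SFinite μ] {K : α × α → ENNReal}
  {A B : ENNReal}

theorem lintegral_prod_mul_le_of_ae_lintegral_le {g : α → ENNReal} (hg : Measurable g)
    (hK : Measurable K) (hrow : ∀ᵐ x ∂μ, ∫⁻ y, K (x, y) ∂μ ≤ A) :
    ∫⁻ z, g z.1 * K z ∂μ.prod μ ≤ A * ∫⁻ x, g x ∂μ := by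
  rw [lintegral_prod _ (by fun_prop)]
  calc ∫⁻ x, ∫⁻ y, g x * K (x, y) ∂μ ∂μ = ∫⁻ x, g x * ∫⁻ y, K (x, y) ∂μ ∂μ :=
        lintegral_congr fun x => lintegral_const_mul _ (hK.comp measurable_prodMk_left)
    _ ≤ ∫⁻ x, A * g x ∂μ := lintegral_mono_ae <| hrow.mono fun x hx => by
        rw [mul_comm A]; gcongr
    _ = A * ∫⁻ x, g x ∂μ := lintegral_const_mul _ hg

/-- The Schur test. -/
theorem lintegral_prod_mul_mul_le {f : α → ENNReal} (hf : Measurable f) (hK : Measurable K)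
    (hrow : ∀ᵐ x ∂μ, ∫⁻ y, K (x, y) ∂μ ≤ A) (hcol : ∀ᵐ y ∂μ, ∫⁻ x, K (x, y) ∂μ ≤ B) :
    ∫⁻ z, f z.1 * f z.2 * K z ∂μ.prod μ ≤ (A + B) / 2 * ∫⁻ x, f x ^ 2 ∂μ := by
  have hrow' : ∫⁻ z, f z.1 ^ 2 / 2 * K z ∂μ.prod μ ≤ A * ∫⁻ x, f x ^ 2 / 2 ∂μ :=
    lintegral_prod_mul_le_of_ae_lintegral_le (by fun_prop) hK hrow
  have hcol' : ∫⁻ z, f z.2 ^ 2 / 2 * K z ∂μ.prod μ ≤ B * ∫⁻ x, f x ^ 2 / 2 ∂μ := by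
    rw [← lintegral_prod_swap]
    exact lintegral_prod_mul_le_of_ae_lintegral_le (by fun_prop) (hK.comp measurable_swap) hcol
  calc ∫⁻ z, f z.1 * f z.2 * K z ∂μ.prod μ
      ≤ ∫⁻ z, (f z.1 ^ 2 / 2 * K z + f z.2 ^ 2 / 2 * K z) ∂μ.prod μ :=
        lintegral_mono fun z => by
          rw [← add_mul]; gcongr; exact ENNReal.mul_le_sq_div_two_add_sq_div_two _ _
    _ = ∫⁻ z, f z.1 ^ 2 / 2 * K z ∂μ.prod μ + ∫⁻ z, f z.2 ^ 2 / 2 * K z ∂μ.prod μ :=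
        lintegral_add_left (by fun_prop) _
    _ ≤ (A + B) * ∫⁻ x, f x ^ 2 / 2 ∂μ := by rw [add_mul]; exact add_le_add hrow' hcol'
    _ = (A + B) / 2 * ∫⁻ x, f x ^ 2 ∂μ := by
        simp only [div_eq_mul_inv]
        rw [lintegral_mul_const _ (by fun_prop)]
        ring

end SchurTest

theorem setLIntegral_ofReal_le_of_le_add {α : Type*} [MeasurableSpace α] {μ : Measure α}
    {s : Set α} (hs : MeasurableSet s) {k g₁ g₂ : α → ℝ} (hg₁ : Measurable g₁) {c₁ c₂ : ℝ}
    (hc₁ : 0 ≤ c₁) (hc₂ : 0 ≤ c₂) (h : ∀ x ∈ s, k x ≤ c₁ * g₁ x + c₂ * g₂ x) :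
    ∫⁻ x in s, ENNReal.ofReal (k x) ∂μ ≤
      ENNReal.ofReal c₁ * ∫⁻ x in s, ENNReal.ofReal (g₁ x) ∂μ +
        ENNReal.ofReal c₂ * ∫⁻ x in s, ENNReal.ofReal (g₂ x) ∂μ := by
  rw [← lintegral_const_mul' _ _ ENNReal.ofReal_ne_top,
    ← lintegral_const_mul' _ _ ENNReal.ofReal_ne_top, ← lintegral_add_left (by fun_prop)]
  refine setLIntegral_mono' hs fun x hx => ?_
  rw [← ENNReal.ofReal_mul hc₁, ← ENNReal.ofReal_mul hc₂]
  exact (ENNReal.ofReal_le_ofReal (h x hx)).trans ENNReal.ofReal_add_le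

theorem lintegral_Iic_mul_exp_mul_sub {c : ℝ} (hc : 0 < c) {C : ℝ} (hC : 0 ≤ C) (t : ℝ) :
    ∫⁻ x in Iic t, ENNReal.ofReal (C * exp (c * (x - t))) = ENNReal.ofReal (C / c) := by
  have hexp (x : ℝ) : C * exp (c * (x - t)) = C * exp (-(c * t)) * exp (c * x) := by
    rw [mul_assoc, ← exp_add]; ring_nf
  simp_rw [hexp]
  rw [← ofReal_integral_eq_lintegral_ofReal ((integrableOn_exp_mul_Iic hc t).const_mul _)
    (ae_of_all _ fun x => by positivity), integral_const_mul, integral_exp_mul_Iic hc,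
    mul_div_assoc', mul_assoc, ← exp_add, neg_add_cancel, exp_zero, mul_one]

theorem lintegral_Ici_mul_exp_mul_sub {c : ℝ} (hc : c < 0) {C : ℝ} (hC : 0 ≤ C) (t : ℝ) :
    ∫⁻ x in Ici t, ENNReal.ofReal (C * exp (c * (x - t))) = ENNReal.ofReal (C / -c) := by
  have hexp (x : ℝ) : C * exp (c * (x - t)) = C * exp (-(c * t)) * exp (c * x) := by
    rw [mul_assoc, ← exp_add]; ring_nf
  simp_rw [hexp]
  rw [← Measure.restrict_congr_set Ioi_ae_eq_Ici,
    ← ofReal_integral_eq_lintegral_ofReal ((integrableOn_exp_mul_Ioi hc t).const_mul _)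
    (ae_of_all _ fun x => by positivity), integral_const_mul, integral_exp_mul_Ioi hc,
    neg_div, div_neg, mul_neg, mul_div_assoc', mul_assoc, ← exp_add, neg_add_cancel, exp_zero,
    mul_one]

section ExpIntegrals

variable {n a y : ℝ}

theorem lintegral_Ici_Iic_fst_mul_exp (hn : 0 < n) (ha : 0 < a) (hy : y < 0) :
    ∫⁻ q in Ici a ×ˢ Iic y, ENNReal.ofReal (q.1 * exp (-2 * n * (a * y - q.1 * q.2))) =
      ENNReal.ofReal (1 / (4 * n ^ 2 * -y)) := by
  rw [Measure.volume_eq_prod, ← Measure.prod_restrict, lintegral_prod _ (by fun_prop)]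
  have inner : ∀ x ∈ Ici a, ∫⁻ v in Iic y, ENNReal.ofReal (x * exp (-2 * n * (a * y - x * v))) =
      ENNReal.ofReal (1 / (2 * n) * exp (2 * n * y * (x - a))) := by
    intro x hx
    have hx : 0 < x := ha.trans_le hx
    have h (v : ℝ) : x * exp (-2 * n * (a * y - x * v)) =
        x * exp (2 * n * y * (x - a)) * exp (2 * n * x * (v - y)) := by
      rw [mul_assoc x, ← exp_add]; ring_nf
    simp_rw [h]
    rw [lintegral_Iic_mul_exp_mul_sub (by positivity) (by positivity)]
    congr 1; field_simp
  rw [setLIntegral_congr_fun measurableSet_Ici inner,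
    lintegral_Ici_mul_exp_mul_sub (by nlinarith) (by positivity)]
  congr 1; field_simp; ring

theorem lintegral_Ici_Iic_neg_snd_mul_exp (hn : 0 < n) (ha : 0 < a) (hy : y < 0) :
    ∫⁻ q in Ici a ×ˢ Iic y, ENNReal.ofReal (-q.2 * exp (-2 * n * (a * y - q.1 * q.2))) =
      ENNReal.ofReal (1 / (4 * n ^ 2 * a)) := by
  rw [Measure.volume_eq_prod, ← Measure.prod_restrict, lintegral_prod_symm _ (by fun_prop)]
  have inner : ∀ v ∈ Iic y, ∫⁻ x in Ici a, ENNReal.ofReal (-v * exp (-2 * n * (a * y - x * v))) =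
      ENNReal.ofReal (1 / (2 * n) * exp (2 * n * a * (v - y))) := by
    intro v hv
    have hv : v < 0 := lt_of_le_of_lt hv hy
    have h (x : ℝ) : -v * exp (-2 * n * (a * y - x * v)) =
        -v * exp (2 * n * a * (v - y)) * exp (2 * n * v * (x - a)) := by
      rw [mul_assoc (-v), ← exp_add]; ring_nf
    simp_rw [h]
    rw [lintegral_Ici_mul_exp_mul_sub (by nlinarith) (mul_nonneg (by linarith) (exp_pos _).le)]
    congr 1; field_simp [hv.ne]
  rw [setLIntegral_congr_fun measurableSet_Iic inner,
    lintegral_Iic_mul_exp_mul_sub (by positivity) (by positivity)]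
  congr 1; field_simp; ring

theorem lintegral_Ioc_Icc_fst_mul_exp_le (hn : 0 < n) (hy : y < 0) :
    ∫⁻ p in Ioc 0 a ×ˢ Icc y 0, ENNReal.ofReal (p.1 * exp (-2 * n * (p.1 * p.2 - a * y))) ≤
      ENNReal.ofReal (1 / (4 * n ^ 2 * -y)) := by
  rw [Measure.volume_eq_prod, ← Measure.prod_restrict, lintegral_prod _ (by fun_prop)]
  have inner : ∀ u ∈ Ioc 0 a, ∫⁻ w in Icc y 0, ENNReal.ofReal (u * exp (-2 * n * (u * w - a * y))) ≤
      ENNReal.ofReal (1 / (2 * n) * exp (-2 * n * y * (u - a))) := by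
    intro u hu
    have hu : 0 < u := hu.1
    have h (w : ℝ) : u * exp (-2 * n * (u * w - a * y)) =
        u * exp (-2 * n * y * (u - a)) * exp (-2 * n * u * (w - y)) := by
      rw [mul_assoc u, ← exp_add]; ring_nf
    simp_rw [h]
    calc _ ≤ ∫⁻ w in Ici y, ENNReal.ofReal
            (u * exp (-2 * n * y * (u - a)) * exp (-2 * n * u * (w - y))) :=
          lintegral_mono_set Icc_subset_Ici_self
      _ = _ := by
          rw [lintegral_Ici_mul_exp_mul_sub (by nlinarith) (by positivity)]
          congr 1; field_simp
  calc _ ≤ ∫⁻ u in Ioc 0 a, ENNReal.ofReal (1 / (2 * n) * exp (-2 * n * y * (u - a))) :=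
        setLIntegral_mono (by fun_prop) inner
    _ ≤ ∫⁻ u in Iic a, ENNReal.ofReal (1 / (2 * n) * exp (-2 * n * y * (u - a))) :=
        lintegral_mono_set Ioc_subset_Iic_self
    _ = _ := by
        rw [lintegral_Iic_mul_exp_mul_sub (by nlinarith) (by positivity)]
        congr 1; field_simp; ring

theorem lintegral_Ioc_Icc_neg_snd_mul_exp_le (hn : 0 < n) (ha : 0 < a) :
    ∫⁻ p in Ioc 0 a ×ˢ Icc y 0, ENNReal.ofReal (-p.2 * exp (-2 * n * (p.1 * p.2 - a * y))) ≤
      ENNReal.ofReal (1 / (4 * n ^ 2 * a)) := by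
  rw [Measure.volume_eq_prod, ← Measure.prod_restrict, lintegral_prod_symm _ (by fun_prop)]
  have inner : ∀ w ∈ Icc y 0,
      ∫⁻ u in Ioc 0 a, ENNReal.ofReal (-w * exp (-2 * n * (u * w - a * y))) ≤
      ENNReal.ofReal (1 / (2 * n) * exp (-2 * n * a * (w - y))) := by
    rintro w ⟨-, hw⟩
    rcases hw.lt_or_eq with hw | rfl
    · have h (u : ℝ) : -w * exp (-2 * n * (u * w - a * y)) =
          -w * exp (-2 * n * a * (w - y)) * exp (-2 * n * w * (u - a)) := by
        rw [mul_assoc (-w), ← exp_add]; ring_nf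
      simp_rw [h]
      calc _ ≤ ∫⁻ u in Iic a, ENNReal.ofReal
              (-w * exp (-2 * n * a * (w - y)) * exp (-2 * n * w * (u - a))) :=
            lintegral_mono_set Ioc_subset_Iic_self
        _ = _ := by
            rw [lintegral_Iic_mul_exp_mul_sub (by nlinarith)
              (mul_nonneg (by linarith) (exp_pos _).le)]
            congr 1; field_simp [hw.ne]
    · simp
  calc _ ≤ ∫⁻ w in Icc y 0, ENNReal.ofReal (1 / (2 * n) * exp (-2 * n * a * (w - y))) :=
        setLIntegral_mono (by fun_prop) inner
    _ ≤ ∫⁻ w in Ici y, ENNReal.ofReal (1 / (2 * n) * exp (-2 * n * a * (w - y))) :=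
        lintegral_mono_set Icc_subset_Ici_self
    _ = _ := by
        rw [lintegral_Ici_mul_exp_mul_sub (by nlinarith) (by positivity)]
        congr 1; field_simp; ring

end ExpIntegrals

noncomputable def i1Kernel (n : ℝ) (p q : ℝ × ℝ) : ℝ :=
  √(p.1 * |p.2|) * √(q.1 * |q.2|) * exp (-2 * n * (p.1 * p.2 - q.1 * q.2))

def omega1 : Set ((ℝ × ℝ) × ℝ × ℝ) :=
  {z | 0 < z.1.1 ∧ z.1.1 ≤ z.2.1 ∧ z.2.2 ≤ z.1.2 ∧ z.1.2 ≤ 0}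

theorem measurableSet_omega1 : MeasurableSet omega1 := by
  simp only [omega1, ofPred_and]
  exact (measurableSet_lt measurable_const (by fun_prop)).inter
    ((measurableSet_le (by fun_prop) (by fun_prop)).inter
      ((measurableSet_le (by fun_prop) (by fun_prop)).inter
        (measurableSet_le (by fun_prop) measurable_const)))

@[fun_prop]
theorem measurable_i1Kernel (n : ℝ) : Measurable fun z : (ℝ × ℝ) × ℝ × ℝ => i1Kernel n z.1 z.2 := by
  unfold i1Kernel; fun_prop

theorem i1Kernel_nonneg (n : ℝ) (p q : ℝ × ℝ) : 0 ≤ i1Kernel n p q := by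
  unfold i1Kernel; positivity

theorem i1Kernel_le {n : ℝ} {p q : ℝ × ℝ} (hp₁ : 0 ≤ p.1) (hp₂ : p.2 ≤ 0) (hq₁ : 0 ≤ q.1)
    (hq₂ : q.2 ≤ 0) :
    i1Kernel n p q ≤ (-p.2 * q.1 + p.1 * -q.2) / 2 * exp (-2 * n * (p.1 * p.2 - q.1 * q.2)) := by
  have amgm : √(p.1 * |p.2|) * √(q.1 * |q.2|) ≤ (-p.2 * q.1 + p.1 * -q.2) / 2 := by
    rw [← sqrt_mul (by positivity), abs_of_nonpos hp₂, abs_of_nonpos hq₂,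
      sqrt_le_left (by nlinarith)]
    nlinarith [sq_nonneg (-p.2 * q.1 - p.1 * -q.2)]
  exact mul_le_mul_of_nonneg_right amgm (exp_pos _).le

theorem lintegral_i1Kernel_row_le {n : ℝ} (hn : 0 < n) {p : ℝ × ℝ} (hp₁ : 0 < p.1)
    (hp₂ : p.2 ≤ 0) :
    ∫⁻ q in Ici p.1 ×ˢ Iic p.2, ENNReal.ofReal (i1Kernel n p q) ≤
      ENNReal.ofReal (1 / (4 * n ^ 2)) := by
  obtain ⟨a, y⟩ := p
  dsimp only at hp₁ hp₂ ⊢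
  rcases hp₂.lt_or_eq with hy | rfl
  · calc _ ≤ ENNReal.ofReal (-y / 2) * ENNReal.ofReal (1 / (4 * n ^ 2 * -y)) +
            ENNReal.ofReal (a / 2) * ENNReal.ofReal (1 / (4 * n ^ 2 * a)) := by
          rw [← lintegral_Ici_Iic_fst_mul_exp hn hp₁ hy,
            ← lintegral_Ici_Iic_neg_snd_mul_exp hn hp₁ hy]
          refine setLIntegral_ofReal_le_of_le_add (measurableSet_Ici.prod measurableSet_Iic)
            (by fun_prop) (by linarith) (by linarith) fun q ⟨hq₁, hq₂⟩ => ?_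
          refine (i1Kernel_le hp₁.le hy.le (hp₁.le.trans hq₁) (hq₂.trans hy.le)).trans_eq ?_
          ring
      _ = ENNReal.ofReal (1 / (4 * n ^ 2)) := by
          have hy' : 0 < -y := neg_pos.mpr hy
          rw [← ENNReal.ofReal_mul (by positivity), ← ENNReal.ofReal_mul (by positivity),
            ← ENNReal.ofReal_add (by positivity) (by positivity)]
          congr 1; field_simp [hy.ne]; ring
  · simp [i1Kernel]

theorem lintegral_i1Kernel_col_le {n : ℝ} (hn : 0 < n) {q : ℝ × ℝ} (hq₁ : 0 < q.1)
    (hq₂ : q.2 ≤ 0) :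
    ∫⁻ p in Ioc 0 q.1 ×ˢ Icc q.2 0, ENNReal.ofReal (i1Kernel n p q) ≤
      ENNReal.ofReal (1 / (4 * n ^ 2)) := by
  obtain ⟨b, y⟩ := q
  dsimp only at hq₁ hq₂ ⊢
  rcases hq₂.lt_or_eq with hy | rfl
  · calc _ ≤ ENNReal.ofReal (-y / 2) * (∫⁻ p in Ioc 0 b ×ˢ Icc y 0,
              ENNReal.ofReal (p.1 * exp (-2 * n * (p.1 * p.2 - b * y)))) +
            ENNReal.ofReal (b / 2) * ∫⁻ p in Ioc 0 b ×ˢ Icc y 0,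
              ENNReal.ofReal (-p.2 * exp (-2 * n * (p.1 * p.2 - b * y))) := by
          refine setLIntegral_ofReal_le_of_le_add (measurableSet_Ioc.prod measurableSet_Icc)
            (by fun_prop) (by linarith) (by linarith) ?_
          rintro p ⟨⟨hp₁, -⟩, -, hp₂⟩
          refine (i1Kernel_le hp₁.le hp₂ hq₁.le hy.le).trans_eq ?_
          ring
      _ ≤ ENNReal.ofReal (-y / 2) * ENNReal.ofReal (1 / (4 * n ^ 2 * -y)) +
            ENNReal.ofReal (b / 2) * ENNReal.ofReal (1 / (4 * n ^ 2 * b)) := by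
          gcongr
          exacts [lintegral_Ioc_Icc_fst_mul_exp_le hn hy,
            lintegral_Ioc_Icc_neg_snd_mul_exp_le hn hq₁]
      _ = ENNReal.ofReal (1 / (4 * n ^ 2)) := by
          have hy' : 0 < -y := neg_pos.mpr hy
          rw [← ENNReal.ofReal_mul (by positivity), ← ENNReal.ofReal_mul (by positivity),
            ← ENNReal.ofReal_add (by positivity) (by positivity)]
          congr 1; field_simp [hy.ne]; ring
  · simp [i1Kernel]

theorem omega1_subset_prod :
    omega1 ⊆ (Ioi (0 : ℝ) ×ˢ Iic (0 : ℝ)) ×ˢ (Ioi (0 : ℝ) ×ˢ Iic (0 : ℝ)) :=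
  fun _ ⟨h₁, h₂, h₃, h₄⟩ => ⟨⟨h₁, h₄⟩, h₁.trans_le h₂, h₃.trans h₄⟩

theorem lintegral_indicator_omega1_row_le {n : ℝ} (hn : 0 < n) {p : ℝ × ℝ} (hp₁ : 0 < p.1)
    (hp₂ : p.2 ≤ 0) :
    ∫⁻ q, omega1.indicator (fun z => ENNReal.ofReal (i1Kernel n z.1 z.2)) (p, q) ≤
      ENNReal.ofReal (1 / (4 * n ^ 2)) := by
  have hsec : (fun q => omega1.indicator (fun z => ENNReal.ofReal (i1Kernel n z.1 z.2)) (p, q)) =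
      (Ici p.1 ×ˢ Iic p.2).indicator fun q => ENNReal.ofReal (i1Kernel n p q) := by
    ext q
    simp [indicator, omega1, hp₁, hp₂]
  rw [hsec, lintegral_indicator (measurableSet_Ici.prod measurableSet_Iic)]
  exact lintegral_i1Kernel_row_le hn hp₁ hp₂

theorem lintegral_indicator_omega1_col_le {n : ℝ} (hn : 0 < n) {q : ℝ × ℝ} (hq₁ : 0 < q.1)
    (hq₂ : q.2 ≤ 0) :
    ∫⁻ p, omega1.indicator (fun z => ENNReal.ofReal (i1Kernel n z.1 z.2)) (p, q) ≤
      ENNReal.ofReal (1 / (4 * n ^ 2)) := by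
  have hsec : (fun p => omega1.indicator (fun z => ENNReal.ofReal (i1Kernel n z.1 z.2)) (p, q)) =
      (Ioc 0 q.1 ×ˢ Icc q.2 0).indicator fun p => ENNReal.ofReal (i1Kernel n p q) := by
    ext p
    simp only [indicator, omega1, mem_ofPred_eq, mem_prod, mem_Ioc, mem_Icc, and_assoc]
    congr
  rw [hsec, lintegral_indicator (measurableSet_Ioc.prod measurableSet_Icc)]
  exact lintegral_i1Kernel_col_le hn hq₁ hq₂

theorem lintegral_omega1_le {n : ℝ} (hn : 0 < n) {F : ℝ × ℝ → ENNReal} (hF : Measurable F) :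
    ∫⁻ z in omega1, F z.1 * F z.2 * ENNReal.ofReal (i1Kernel n z.1 z.2) ≤
      ENNReal.ofReal (1 / (4 * n ^ 2)) * ∫⁻ p in Ioi (0 : ℝ) ×ˢ Iic (0 : ℝ), F p ^ 2 := by
  set D : Set (ℝ × ℝ) := Ioi 0 ×ˢ Iic 0
  set K := omega1.indicator fun z => ENNReal.ofReal (i1Kernel n z.1 z.2)
  have hD : MeasurableSet D := measurableSet_Ioi.prod measurableSet_Iic
  have hK : Measurable K := (by fun_prop : Measurable _).indicator measurableSet_omega1
  have hrow : ∀ᵐ p ∂volume.restrict D, ∫⁻ q in D, K (p, q) ≤ ENNReal.ofReal (1 / (4 * n ^ 2)) := by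
    filter_upwards [ae_restrict_mem hD] with p ⟨hp₁, hp₂⟩
    exact (setLIntegral_le_lintegral _ _).trans (lintegral_indicator_omega1_row_le hn hp₁ hp₂)
  have hcol : ∀ᵐ q ∂volume.restrict D, ∫⁻ p in D, K (p, q) ≤ ENNReal.ofReal (1 / (4 * n ^ 2)) := by
    filter_upwards [ae_restrict_mem hD] with q ⟨hq₁, hq₂⟩
    exact (setLIntegral_le_lintegral _ _).trans (lintegral_indicator_omega1_col_le hn hq₁ hq₂)
  calc ∫⁻ z in omega1, F z.1 * F z.2 * ENNReal.ofReal (i1Kernel n z.1 z.2)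
      = ∫⁻ z in D ×ˢ D, omega1.indicator
          (fun z => F z.1 * F z.2 * ENNReal.ofReal (i1Kernel n z.1 z.2)) z := by
        rw [setLIntegral_indicator measurableSet_omega1, inter_eq_left.mpr omega1_subset_prod]
    _ = ∫⁻ z, F z.1 * F z.2 * K z ∂(volume.restrict D).prod (volume.restrict D) := by
        simp_rw [K, indicator_mul_right]
        rw [Measure.prod_restrict, ← Measure.volume_eq_prod]
    _ ≤ _ := lintegral_prod_mul_mul_le hF hK hrow hcol
    _ = _ := by rw [ENNReal.add_div, ENNReal.add_halves]

theorem I1_eq (n : ℝ) (f : ℝ → ℝ → ℝ) :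
    I1 n f = n ^ 2 * ∫ z in omega1, f z.1.1 z.1.2 * f z.2.1 z.2.2 * i1Kernel n z.1 z.2 := by
  simp only [I1, omega1, i1Kernel, mul_assoc]

theorem I1_le_toReal_lintegral (n : ℝ) (f : ℝ → ℝ → ℝ) :
    I1 n f ≤ n ^ 2 * (∫⁻ z in omega1, ENNReal.ofReal |f z.1.1 z.1.2| *
      ENNReal.ofReal |f z.2.1 z.2.2| * ENNReal.ofReal (i1Kernel n z.1 z.2)).toReal := by
  rw [I1_eq]
  gcongr
  refine (Real.le_norm_self _).trans ((norm_integral_le_lintegral_norm _).trans_eq ?_)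
  congr 1
  refine lintegral_congr fun z => ?_
  rw [Real.norm_eq_abs, abs_mul, abs_mul, abs_of_nonneg (i1Kernel_nonneg _ _ _),
    ENNReal.ofReal_mul (by positivity), ENNReal.ofReal_mul (abs_nonneg _)]

theorem stmt8_general {n : ℝ} (hn : 0 < n) (f : ℝ → ℝ → ℝ)
    (hf_meas : Measurable (Function.uncurry f))
    (hf_sq : IntegrableOn (fun p : ℝ × ℝ => (f p.1 p.2) ^ 2)
      (Set.Ioi (0 : ℝ) ×ˢ Set.Iic (0 : ℝ))) :
    I1 n f ≤ 37 / 8 * ∫ p in Set.Ioi (0 : ℝ) ×ˢ Set.Iic (0 : ℝ), (f p.1 p.2) ^ 2 := by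
  have hL2 : ∫⁻ p in Ioi (0 : ℝ) ×ˢ Iic (0 : ℝ), ENNReal.ofReal |f p.1 p.2| ^ 2 =
      ENNReal.ofReal (∫ p in Ioi (0 : ℝ) ×ˢ Iic (0 : ℝ), (f p.1 p.2) ^ 2) := by
    rw [ofReal_integral_eq_lintegral_ofReal hf_sq (ae_of_all _ fun _ => sq_nonneg _)]
    simp_rw [← ENNReal.ofReal_pow (abs_nonneg _), sq_abs]
  have hbound := lintegral_omega1_le hn (F := fun p => ENNReal.ofReal |f p.1 p.2|)
    hf_meas.abs.ennreal_ofReal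
  rw [hL2, ← ENNReal.ofReal_mul (by positivity)] at hbound
  have hnonneg : 0 ≤ ∫ p in Ioi (0 : ℝ) ×ˢ Iic (0 : ℝ), (f p.1 p.2) ^ 2 :=
    integral_nonneg fun _ => sq_nonneg _
  calc I1 n f
      ≤ n ^ 2 * (1 / (4 * n ^ 2) * ∫ p in Ioi (0 : ℝ) ×ˢ Iic (0 : ℝ), (f p.1 p.2) ^ 2) := by
        refine (I1_le_toReal_lintegral n f).trans ?_
        gcongr
        exact ENNReal.toReal_le_of_le_ofReal (by positivity) hbound
    _ ≤ _ := by field_simp; linarith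

/-- For every `n > 0` and every nonnegative measurable `f` on
`(0,∞) × (−∞,0]` with `∫₀^∞∫_{−∞}^0 f² < ∞`,
`I₁(n,f) ≤ (37/8) ∫₀^∞∫_{−∞}^0 f(x,y)² dx dy`. -/
theorem stmt8 {n : ℝ} (hn : 0 < n) (f : ℝ → ℝ → ℝ)
    (hf_meas : Measurable (Function.uncurry f))
    (hf_nonneg : ∀ x y : ℝ, 0 < x → y ≤ 0 → 0 ≤ f x y)
    (hf_sq : IntegrableOn (fun p : ℝ × ℝ => (f p.1 p.2) ^ 2)
      (Set.Ioi (0 : ℝ) ×ˢ Set.Iic (0 : ℝ))) :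
    I1 n f ≤ 37 / 8 * ∫ p in Set.Ioi (0 : ℝ) ×ˢ Set.Iic (0 : ℝ), (f p.1 p.2) ^ 2 :=
  stmt8_general hn f hf_meas hf_sq
end

section
/- Fix H ∈ (1/2,1) and s > 0. For 0 ≤ t ≤ 1 let S = {(x,y) : x > 0, −t−s < y < −s} and φ̃_t(x,y) = φ_t(x,y)·1_S(x,y), where φ_t(x,y) = g_s(t,x,y)/x^{2−H}. Let K₁ = 3/(8H(2H−1)) + 1/(8H(3−2H)) + 1/(4H²−1). Then for every n > 0 and every t ∈ [0,1], I₂(n, φ̃_t) ≤ K₁ √((s+1)/s) · t^{2H}. -/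
open MeasureTheory ProbabilityTheory Filter Topology

/-! On the support of `φ̃_t` one has `g_s(t,x,y) = min(x, -s-y)`. Split the exponential as
`e^(-2n x₁ (y₂-y₁)) e^(-2n |y₂| (x₂-x₁))` and write each factor as an exponential density divided
by its rate `2n x₁`, resp. `2n |y₂|`. The densities have `y₁`-, resp. `x₂`-integral at most `1`,
while dividing `φ̃_t(x₁,y₁) √(x₁|y₁|)` by `x₁` and `φ̃_t(x₂,y₂) √(x₂|y₂|)` by `|y₂|` leaves at most
`√(s+1) min(x₁,t) x₁^(H-5/2)` times `(-s-y₂)^(H-1/2) / √s`, a function of `x₁` times a function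
of `y₂`. Their integrals are `t^(H-1/2) / ((H-1/2)(3/2-H))` and `t^(H+1/2) / (H+1/2)`, and the
resulting constant `1 / (4 (H-1/2)(3/2-H)(H+1/2))` is at most `K₁` when `H < 1`. -/

open Real Set
open scoped ENNReal

@[fun_prop]
theorem Measurable.exponentialPDF {α : Type*} [MeasurableSpace α] {f g : α → ℝ}
    (hf : Measurable f) (hg : Measurable g) :
    Measurable fun x => exponentialPDF (f x) (g x) := by
  simp only [exponentialPDF_eq]
  exact (Measurable.ite (measurableSet_le measurable_const hg) (by fun_prop)
    measurable_const).ennreal_ofReal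

theorem lintegral_exponentialPDF_le_one (r : ℝ) : ∫⁻ x, exponentialPDF r x ≤ 1 := by
  rcases lt_or_ge 0 r with hr | hr
  · exact (lintegral_exponentialPDF_eq_one hr).le
  · have hzero : ∀ x, exponentialPDF r x = 0 := fun x => by
      rw [exponentialPDF_eq, ENNReal.ofReal_eq_zero]
      split_ifs
      · exact mul_nonpos_of_nonpos_of_nonneg hr (exp_pos _).le
      · rfl
    simp [hzero]

theorem lintegral_exponentialPDF_sub_right_le (r w : ℝ) :
    ∫⁻ z, exponentialPDF r (z - w) ≤ 1 := by
  rw [lintegral_sub_right_eq_self (exponentialPDF r) w]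
  exact lintegral_exponentialPDF_le_one r

theorem lintegral_exponentialPDF_sub_left_le (r w : ℝ) :
    ∫⁻ z, exponentialPDF r (w - z) ≤ 1 := by
  rw [lintegral_sub_left_eq_self (exponentialPDF r) w]
  exact lintegral_exponentialPDF_le_one r

theorem lintegral_prod_prod_eq {α β γ δ : Type*} [MeasurableSpace α] [MeasurableSpace β]
    [MeasurableSpace γ] [MeasurableSpace δ] {μa : Measure α} {μb : Measure β} {μc : Measure γ}
    {μd : Measure δ} [SFinite μa] [SFinite μb] [SFinite μc] [SFinite μd]
    {f : (α × β) × γ × δ → ℝ≥0∞} (hf : Measurable f) :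
    ∫⁻ p, f p ∂(μa.prod μb).prod (μc.prod μd)
      = ∫⁻ a, ∫⁻ d, ∫⁻ b, ∫⁻ c, f ((a, b), (c, d)) ∂μc ∂μb ∂μd ∂μa := by
  have hinner : Measurable fun q : (α × β) × δ => ∫⁻ c, f (q.1, (c, q.2)) ∂μc :=
    (hf.comp (f := fun q : ((α × β) × δ) × γ => (q.1.1, (q.2, q.1.2)))
      (by fun_prop)).lintegral_prod_right'
  rw [lintegral_prod _ hf.aemeasurable, lintegral_prod _ hf.lintegral_prod_right'.aemeasurable]
  refine lintegral_congr fun a => ?_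
  refine (lintegral_congr fun b => lintegral_prod_symm _ (hf.comp ?_).aemeasurable).trans ?_
  · fun_prop
  exact lintegral_lintegral_swap
    (hinner.comp (f := fun q : β × δ => ((a, q.1), q.2)) (by fun_prop)).aemeasurable

theorem lintegral_mul_exponentialPDF_le {ρ σ : ℝ → ℝ} {a b : ℝ → ℝ≥0∞} (ha : Measurable a)
    (hb : Measurable b) (hρ : Measurable ρ) (hσ : Measurable σ) :
    ∫⁻ p : (ℝ × ℝ) × ℝ × ℝ, a p.1.1 * b p.2.2 * exponentialPDF (ρ p.1.1) (p.2.2 - p.1.2)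
        * exponentialPDF (σ p.2.2) (p.2.1 - p.1.1)
      ≤ (∫⁻ x, a x) * ∫⁻ y, b y := by
  simp only [Measure.volume_eq_prod]
  rw [lintegral_prod_prod_eq (by fun_prop),
    ← lintegral_lintegral_mul ha.aemeasurable hb.aemeasurable]
  refine lintegral_mono fun x₁ => lintegral_mono fun y₂ => ?_
  have hσ' : Measurable fun x₂ => exponentialPDF (σ y₂) (x₂ - x₁) := by fun_prop
  calc ∫⁻ y₁, ∫⁻ x₂, a x₁ * b y₂ * exponentialPDF (ρ x₁) (y₂ - y₁)
          * exponentialPDF (σ y₂) (x₂ - x₁)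
      = ∫⁻ y₁, a x₁ * b y₂ * exponentialPDF (ρ x₁) (y₂ - y₁)
          * ∫⁻ x₂, exponentialPDF (σ y₂) (x₂ - x₁) := by
        simp_rw [lintegral_const_mul _ hσ']
    _ ≤ ∫⁻ y₁, a x₁ * b y₂ * exponentialPDF (ρ x₁) (y₂ - y₁) :=
        lintegral_mono fun y₁ =>
          mul_le_of_le_one_right' (lintegral_exponentialPDF_sub_right_le _ _)
    _ = a x₁ * b y₂ * ∫⁻ y₁, exponentialPDF (ρ x₁) (y₂ - y₁) :=
        lintegral_const_mul _ (by fun_prop)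
    _ ≤ a x₁ * b y₂ := mul_le_of_le_one_right' (lintegral_exponentialPDF_sub_left_le _ _)

theorem integral_le_of_lintegral_ofReal_norm_le {α : Type*} [MeasurableSpace α]
    {μ : Measure α} {f : α → ℝ} {c : ℝ} (hc : 0 ≤ c)
    (h : ∫⁻ a, ENNReal.ofReal ‖f a‖ ∂μ ≤ ENNReal.ofReal c) :
    ∫ a, f a ∂μ ≤ c :=
  (le_abs_self _).trans
    ((norm_integral_le_lintegral_norm f).trans (ENNReal.toReal_le_of_le_ofReal hc h))

theorem min_mul_rpow_le {x a r : ℝ} (hx : 0 < x) (ha : 0 < a) (hr₀ : r ≤ 0) (hr₁ : -1 ≤ r) :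
    min x a * x ^ r ≤ a ^ (r + 1) := by
  rcases le_total x a with hxa | hax
  · rw [min_eq_left hxa, mul_comm, ← rpow_add_one hx.ne']
    exact rpow_le_rpow hx.le hxa (by linarith)
  · rw [min_eq_right hax, rpow_add_one ha.ne', mul_comm]
    exact mul_le_mul_of_nonneg_right (rpow_le_rpow_of_nonpos ha hax hr₀) ha.le

theorem lintegral_rpow_Ioc_zero {t r : ℝ} (ht : 0 ≤ t) (hr : -1 < r) :
    ∫⁻ x in Ioc 0 t, ENNReal.ofReal (x ^ r) = ENNReal.ofReal (t ^ (r + 1) / (r + 1)) := by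
  rw [← ofReal_integral_eq_lintegral_ofReal (intervalIntegral.intervalIntegrable_rpow' hr).1
      ((ae_restrict_iff' measurableSet_Ioc).2 (.of_forall fun x hx => rpow_nonneg hx.1.le r)),
    ← intervalIntegral.integral_of_le ht, integral_rpow (.inl hr),
    zero_rpow (by linarith), sub_zero]

theorem lintegral_rpow_Ioi {t r : ℝ} (ht : 0 < t) (hr : r < -1) :
    ∫⁻ x in Ioi t, ENNReal.ofReal (x ^ r) = ENNReal.ofReal (-t ^ (r + 1) / (r + 1)) := by
  rw [← ofReal_integral_eq_lintegral_ofReal (integrableOn_Ioi_rpow_of_lt hr ht)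
      ((ae_restrict_iff' measurableSet_Ioi).2
        (.of_forall fun x hx => rpow_nonneg (ht.trans hx).le r)),
    integral_Ioi_rpow_of_lt hr ht]

theorem lintegral_min_mul_rpow_Ioi {t r : ℝ} (ht : 0 < t) (hr₂ : -2 < r) (hr₁ : r < -1) :
    ∫⁻ x in Ioi 0, ENNReal.ofReal (min x t * x ^ r)
      = ENNReal.ofReal (t ^ (r + 2) / ((r + 2) * (-1 - r))) := by
  have h₂ : 0 < r + 2 := by linarith
  have h₁ : 0 < -1 - r := by linarith
  have hnear : ∫⁻ x in Ioc 0 t, ENNReal.ofReal (min x t * x ^ r)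
      = ENNReal.ofReal (t ^ (r + 2) / (r + 2)) := by
    rw [setLIntegral_congr_fun measurableSet_Ioc fun x hx => by
        rw [min_eq_left hx.2, mul_comm, ← rpow_add_one hx.1.ne'],
      lintegral_rpow_Ioc_zero ht.le (by linarith), add_assoc]
    norm_num
  have hfar : ∫⁻ x in Ioi t, ENNReal.ofReal (min x t * x ^ r)
      = ENNReal.ofReal (t ^ (r + 2) / (-1 - r)) := by
    rw [setLIntegral_congr_fun measurableSet_Ioi fun x hx => by
        rw [min_eq_right hx.le, ENNReal.ofReal_mul ht.le],
      lintegral_const_mul' _ _ ENNReal.ofReal_ne_top, lintegral_rpow_Ioi ht hr₁,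
      ← ENNReal.ofReal_mul ht.le, show r + 2 = r + 1 + 1 by ring, rpow_add_one ht.ne' (r + 1)]
    congr 1
    rw [neg_div, ← div_neg, neg_add']
    ring
  rw [← Ioc_union_Ioi_eq_Ioi ht.le, lintegral_union measurableSet_Ioi Ioc_disjoint_Ioi_same,
    hnear, hfar, ← ENNReal.ofReal_add (by positivity) (by positivity)]
  congr 1
  field_simp
  ring

theorem lintegral_sub_rpow_Ioo {b t p : ℝ} (ht : 0 ≤ t) (hp : -1 < p) :
    ∫⁻ y in Ioo (b - t) b, ENNReal.ofReal ((b - y) ^ p)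
      = ENNReal.ofReal (t ^ (p + 1) / (p + 1)) := by
  have hreflect : ∀ y, (Ioo (b - t) b).indicator (fun y => ENNReal.ofReal ((b - y) ^ p)) y
      = (Ioo 0 t).indicator (fun x => ENNReal.ofReal (x ^ p)) (b - y) := fun y => by
    by_cases hy : y ∈ Ioo (b - t) b
    · rw [indicator_of_mem hy, indicator_of_mem (by constructor <;> linarith [hy.1, hy.2])]
    · rw [indicator_of_notMem hy,
        indicator_of_notMem fun h => hy (by constructor <;> linarith [h.1, h.2])]
  rw [← lintegral_indicator measurableSet_Ioo, lintegral_congr hreflect,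
    lintegral_sub_left_eq_self (fun x => (Ioo 0 t).indicator (fun x => ENNReal.ofReal (x ^ p)) x),
    lintegral_indicator measurableSet_Ioo, setLIntegral_congr Ioo_ae_eq_Ioc,
    lintegral_rpow_Ioc_zero ht hp]

noncomputable def phiTilde (H s t x y : ℝ) : ℝ :=
  if 0 < x ∧ -t - s < y ∧ y < -s then gker s t x y / x ^ (2 - H) else 0

noncomputable def K₁ (H : ℝ) : ℝ :=
  3 / (8 * H * (2 * H - 1)) + 1 / (8 * H * (3 - 2 * H)) + 1 / (4 * H ^ 2 - 1)

section Kernel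

variable {H s t n x y : ℝ}

theorem gker_eq_min (hs : 0 < s) (hx : 0 < x) (hy₁ : -t - s < y) (hy₂ : y < -s) :
    gker s t x y = min x (-s - y) := by
  rw [gker, hker, hker, min_eq_right (by linarith : (0 : ℝ) ≤ t + s + y),
    min_eq_left (by linarith : y ≤ 0), min_eq_left (by linarith : s + y ≤ 0), zero_add,
    max_eq_left hx.le]
  rcases le_total x (-s - y) with h | h
  · rw [min_eq_left h, max_eq_right (show s + y + x ≤ 0 by linarith)]; ring
  · rw [min_eq_right h, max_eq_left (show 0 ≤ s + y + x by linarith)]; ring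

theorem phiTilde_nonneg (hs : 0 < s) : 0 ≤ phiTilde H s t x y := by
  unfold phiTilde
  split_ifs with h
  · rw [gker_eq_min hs h.1 h.2.1 h.2.2]
    exact div_nonneg (le_min h.1.le (by linarith [h.2.2])) (rpow_nonneg h.1.le _)
  · rfl

theorem phiTilde_zero_time : phiTilde H s 0 = fun _ _ => 0 := by
  funext x y
  simp only [phiTilde, ite_eq_right_iff]
  intro h
  linarith [h.2.1, h.2.2]

theorem phiTilde_mul_sqrt_eq (hs : 0 < s) (hx : 0 < x) (hy₁ : -t - s < y) (hy₂ : y < -s) :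
    phiTilde H s t x y * √(x * |y|) = min x (-s - y) * x ^ (H - 3 / 2) * √(-y) := by
  rw [phiTilde, if_pos ⟨hx, hy₁, hy₂⟩, gker_eq_min hs hx hy₁ hy₂, abs_of_neg (by linarith),
    sqrt_mul hx.le, sqrt_eq_rpow x, div_eq_mul_inv, ← rpow_neg hx.le,
    show H - 3 / 2 = -(2 - H) + 1 / 2 by ring, rpow_add hx]
  ring

theorem phiTilde_mul_sqrt_div_le_left (hs : 0 < s) (ht : t ≤ 1) (hx : 0 < x)
    (hy₁ : -t - s < y) (hy₂ : y < -s) :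
    phiTilde H s t x y * √(x * |y|) / x ≤ √(s + 1) * (min x t * x ^ (H - 5 / 2)) := by
  have ht₀ : 0 < t := by linarith
  have hpow : x ^ (H - 3 / 2) / x = x ^ (H - 5 / 2) := by
    rw [div_eq_iff hx.ne', ← rpow_add_one hx.ne']; ring_nf
  calc phiTilde H s t x y * √(x * |y|) / x
      = min x (-s - y) * x ^ (H - 5 / 2) * √(-y) := by
        rw [phiTilde_mul_sqrt_eq hs hx hy₁ hy₂, ← hpow]; ring
    _ ≤ min x t * x ^ (H - 5 / 2) * √(s + 1) := by
        gcongr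
        · linarith
        · linarith
    _ = √(s + 1) * (min x t * x ^ (H - 5 / 2)) := mul_comm _ _

theorem phiTilde_mul_sqrt_div_le_right (hH₁ : 1 / 2 ≤ H) (hH₂ : H ≤ 3 / 2) (hs : 0 < s)
    (hx : 0 < x) (hy₁ : -t - s < y) (hy₂ : y < -s) :
    phiTilde H s t x y * √(x * |y|) / (-y) ≤ (-s - y) ^ (H - 1 / 2) / √s := by
  have hy : 0 < -y := by linarith
  have hsqrt : √(-y) / (-y) = (√(-y))⁻¹ := by
    rw [div_eq_iff hy.ne', inv_mul_eq_div, div_sqrt]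
  calc phiTilde H s t x y * √(x * |y|) / (-y)
      = min x (-s - y) * x ^ (H - 3 / 2) * (√(-y))⁻¹ := by
        rw [phiTilde_mul_sqrt_eq hs hx hy₁ hy₂, ← hsqrt]; ring
    _ ≤ (-s - y) ^ (H - 3 / 2 + 1) * (√s)⁻¹ := by
        gcongr
        · exact min_mul_rpow_le hx (by linarith) (by linarith) (by linarith)
        · linarith
    _ = (-s - y) ^ (H - 1 / 2) / √s := by ring_nf

theorem I2_integrand_le (hH₁ : 1 / 2 ≤ H) (hH₂ : H ≤ 3 / 2) (hs : 0 < s) (ht : t ≤ 1)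
    (hn : 0 < n) {x₁ y₁ x₂ y₂ : ℝ} (hx₁ : 0 < x₁) (hy₁l : -t - s < y₁) (hy₁u : y₁ < -s)
    (hx₂ : 0 < x₂) (hy₂l : -t - s < y₂) (hy₂u : y₂ < -s) :
    phiTilde H s t x₁ y₁ * phiTilde H s t x₂ y₂ * √(x₁ * |y₁|) * √(x₂ * |y₂|)
        * exp (-2 * n * (x₁ * (y₂ - y₁) - (x₂ - x₁) * y₂))
      ≤ √(s + 1) / (4 * n ^ 2 * √s) * (min x₁ t * x₁ ^ (H - 5 / 2)
          * (-s - y₂) ^ (H - 1 / 2) * (2 * n * x₁ * exp (-(2 * n * x₁ * (y₂ - y₁))))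
          * (2 * n * -y₂ * exp (-(2 * n * -y₂ * (x₂ - x₁))))) := by
  have hy₂ : 0 < -y₂ := by linarith
  have ht₀ : 0 < t := by linarith
  have hexp : exp (-2 * n * (x₁ * (y₂ - y₁) - (x₂ - x₁) * y₂))
      = exp (-(2 * n * x₁ * (y₂ - y₁))) * exp (-(2 * n * -y₂ * (x₂ - x₁))) := by
    rw [← exp_add]; ring_nf
  calc phiTilde H s t x₁ y₁ * phiTilde H s t x₂ y₂ * √(x₁ * |y₁|) * √(x₂ * |y₂|)
        * exp (-2 * n * (x₁ * (y₂ - y₁) - (x₂ - x₁) * y₂))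
      = phiTilde H s t x₁ y₁ * √(x₁ * |y₁|) / x₁
          * (phiTilde H s t x₂ y₂ * √(x₂ * |y₂|) / -y₂)
          * (4 * n ^ 2)⁻¹ * (2 * n * x₁ * exp (-(2 * n * x₁ * (y₂ - y₁))))
          * (2 * n * -y₂ * exp (-(2 * n * -y₂ * (x₂ - x₁)))) := by
        rw [hexp]
        field_simp [hy₂.ne', (neg_pos.1 hy₂).ne]
        ring
    _ ≤ √(s + 1) * (min x₁ t * x₁ ^ (H - 5 / 2)) * ((-s - y₂) ^ (H - 1 / 2) / √s)
          * (4 * n ^ 2)⁻¹ * (2 * n * x₁ * exp (-(2 * n * x₁ * (y₂ - y₁))))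
          * (2 * n * -y₂ * exp (-(2 * n * -y₂ * (x₂ - x₁)))) := by
        have hφ₁ := phiTilde_nonneg (H := H) (t := t) (x := x₁) (y := y₁) hs
        have hφ₂ := phiTilde_nonneg (H := H) (t := t) (x := x₂) (y := y₂) hs
        gcongr ?_ * ?_ * _ * _ * _
        · exact phiTilde_mul_sqrt_div_le_left hs ht hx₁ hy₁l hy₁u
        · exact phiTilde_mul_sqrt_div_le_right hH₁ hH₂ hs hx₂ hy₂l hy₂u
    _ = _ := by field_simp

theorem ofReal_norm_I2_integrand_le (hH₁ : 1 / 2 ≤ H) (hH₂ : H ≤ 3 / 2) (hs : 0 < s)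
    (ht : t ≤ 1) (hn : 0 < n) {x₁ y₁ x₂ y₂ : ℝ} (hx : x₁ ≤ x₂) (hy : y₁ ≤ y₂) :
    ENNReal.ofReal ‖phiTilde H s t x₁ y₁ * phiTilde H s t x₂ y₂ * √(x₁ * |y₁|) * √(x₂ * |y₂|)
        * exp (-2 * n * (x₁ * (y₂ - y₁) - (x₂ - x₁) * y₂))‖
      ≤ ENNReal.ofReal (√(s + 1) / (4 * n ^ 2 * √s)) *
        ((Ioi 0).indicator (fun x => ENNReal.ofReal (min x t * x ^ (H - 5 / 2))) x₁ *
          (Ioo (-s - t) (-s)).indicator (fun y => ENNReal.ofReal ((-s - y) ^ (H - 1 / 2))) y₂ *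
          exponentialPDF (2 * n * x₁) (y₂ - y₁) * exponentialPDF (2 * n * -y₂) (x₂ - x₁)) := by
  by_cases h₁ : 0 < x₁ ∧ -t - s < y₁ ∧ y₁ < -s
  swap
  · simp [phiTilde, h₁]
  by_cases h₂ : 0 < x₂ ∧ -t - s < y₂ ∧ y₂ < -s
  swap
  · simp [phiTilde, h₂]
  obtain ⟨hx₁, hy₁l, hy₁u⟩ := h₁
  obtain ⟨hx₂, hy₂l, hy₂u⟩ := h₂
  have ht₀ : 0 < t := by linarith
  have hφ₁ := phiTilde_nonneg (H := H) (t := t) (x := x₁) (y := y₁) hs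
  have hφ₂ := phiTilde_nonneg (H := H) (t := t) (x := x₂) (y := y₂) hs
  rw [indicator_of_mem (show x₁ ∈ Ioi 0 from hx₁),
    indicator_of_mem (show y₂ ∈ Ioo (-s - t) (-s) from ⟨by linarith, hy₂u⟩),
    exponentialPDF_of_nonneg (sub_nonneg.2 hy), exponentialPDF_of_nonneg (sub_nonneg.2 hx),
    ← ENNReal.ofReal_mul (by positivity), ← ENNReal.ofReal_mul (by positivity),
    ← ENNReal.ofReal_mul (by positivity), ← ENNReal.ofReal_mul (by positivity),
    Real.norm_eq_abs, abs_of_nonneg (by positivity)]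
  exact ENNReal.ofReal_le_ofReal (I2_integrand_le hH₁ hH₂ hs ht hn hx₁ hy₁l hy₁u hx₂ hy₂l hy₂u)

theorem setLIntegral_I2_integrand_le (hH₁ : 1 / 2 < H) (hH₂ : H < 3 / 2) (hs : 0 < s)
    (ht₀ : 0 < t) (ht₁ : t ≤ 1) (hn : 0 < n) :
    ∫⁻ p in {p : (ℝ × ℝ) × ℝ × ℝ | 0 < p.1.1 ∧ p.1.1 ≤ p.2.1 ∧ p.1.2 < p.2.2 ∧ p.2.2 ≤ 0},
        ENNReal.ofReal ‖phiTilde H s t p.1.1 p.1.2 * phiTilde H s t p.2.1 p.2.2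
          * √(p.1.1 * |p.1.2|) * √(p.2.1 * |p.2.2|)
          * exp (-2 * n * (p.1.1 * (p.2.2 - p.1.2) - (p.2.1 - p.1.1) * p.2.2))‖
      ≤ ENNReal.ofReal (√(s + 1) / (4 * n ^ 2 * √s)
          * (t ^ (H - 1 / 2) / ((H - 1 / 2) * (3 / 2 - H))) * (t ^ (H + 1 / 2) / (H + 1 / 2))) := by
  set C := √(s + 1) / (4 * n ^ 2 * √s)
  set A : ℝ → ℝ≥0∞ := (Ioi 0).indicator fun x => ENNReal.ofReal (min x t * x ^ (H - 5 / 2))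
  set W : ℝ → ℝ≥0∞ :=
    (Ioo (-s - t) (-s)).indicator fun y => ENNReal.ofReal ((-s - y) ^ (H - 1 / 2))
  have hA : Measurable A := (by fun_prop : Measurable fun x : ℝ => _).indicator measurableSet_Ioi
  have hW : Measurable W := (by fun_prop : Measurable fun y : ℝ => _).indicator measurableSet_Ioo
  have hIA : ∫⁻ x, A x = ENNReal.ofReal (t ^ (H - 1 / 2) / ((H - 1 / 2) * (3 / 2 - H))) := by
    rw [lintegral_indicator measurableSet_Ioi,
      lintegral_min_mul_rpow_Ioi ht₀ (by linarith) (by linarith),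
      show H - 5 / 2 + 2 = H - 1 / 2 by ring, show -1 - (H - 5 / 2) = 3 / 2 - H by ring]
  have hIW : ∫⁻ y, W y = ENNReal.ofReal (t ^ (H + 1 / 2) / (H + 1 / 2)) := by
    rw [lintegral_indicator measurableSet_Ioo, lintegral_sub_rpow_Ioo ht₀.le (by linarith)]
    ring_nf
  calc _ ≤ ∫⁻ p in {p : (ℝ × ℝ) × ℝ × ℝ | 0 < p.1.1 ∧ p.1.1 ≤ p.2.1 ∧ p.1.2 < p.2.2 ∧ p.2.2 ≤ 0},
          ENNReal.ofReal C * (A p.1.1 * W p.2.2 * exponentialPDF (2 * n * p.1.1) (p.2.2 - p.1.2)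
            * exponentialPDF (2 * n * -p.2.2) (p.2.1 - p.1.1)) :=
        setLIntegral_mono (by fun_prop) fun p hp =>
          ofReal_norm_I2_integrand_le hH₁.le hH₂.le hs ht₁ hn hp.2.1 hp.2.2.1.le
    _ ≤ ∫⁻ p : (ℝ × ℝ) × ℝ × ℝ, ENNReal.ofReal C * (A p.1.1 * W p.2.2
          * exponentialPDF (2 * n * p.1.1) (p.2.2 - p.1.2)
          * exponentialPDF (2 * n * -p.2.2) (p.2.1 - p.1.1)) := setLIntegral_le_lintegral _ _
    _ ≤ ENNReal.ofReal C * ((∫⁻ x, A x) * ∫⁻ y, W y) := by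
        have hρ : Measurable fun x : ℝ => 2 * n * x := by fun_prop
        have hσ : Measurable fun y : ℝ => 2 * n * -y := by fun_prop
        rw [lintegral_const_mul' _ _ ENNReal.ofReal_ne_top]
        exact mul_le_mul_right (lintegral_mul_exponentialPDF_le hA hW hρ hσ) _
    _ = _ := by
        rw [hIA, hIW, ← ENNReal.ofReal_mul' (by positivity), ← ENNReal.ofReal_mul (by positivity),
          mul_assoc C]

theorem inv_le_K₁ (hH₁ : 1 / 2 < H) (hH₂ : H < 1) :
    (4 * ((H - 1 / 2) * (3 / 2 - H) * (H + 1 / 2)))⁻¹ ≤ K₁ H := by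
  have ha : 0 < 2 * H - 1 := by linarith
  have hb : 0 < 3 - 2 * H := by linarith
  have hsplit : (4 * ((H - 1 / 2) * (3 / 2 - H) * (H + 1 / 2)))⁻¹
      = 1 / (4 * H ^ 2 - 1) + 1 / ((3 - 2 * H) * (2 * H + 1)) := by
    have h₃ : 0 < 4 * H ^ 2 - 1 := by nlinarith
    rw [inv_eq_one_div, div_add_div _ _ h₃.ne' (by positivity),
      div_eq_div_iff (mul_pos (by norm_num) (mul_pos (mul_pos (by linarith) (by linarith))
        (by linarith))).ne' (by positivity)]
    ring
  have hcross : 1 / ((3 - 2 * H) * (2 * H + 1)) ≤ 3 / (8 * H * (2 * H - 1)) := by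
    rw [div_le_div_iff₀ (by positivity) (by positivity)]
    nlinarith
  have hpos : 0 ≤ 1 / (8 * H * (3 - 2 * H)) := by positivity
  rw [hsplit, K₁]
  linarith

theorem sq_mul_I2_bound_le (hH₁ : 1 / 2 < H) (hH₂ : H < 1) (hs : 0 < s) (ht : 0 < t)
    (hn : 0 < n) :
    n ^ 2 * (√(s + 1) / (4 * n ^ 2 * √s) * (t ^ (H - 1 / 2) / ((H - 1 / 2) * (3 / 2 - H)))
        * (t ^ (H + 1 / 2) / (H + 1 / 2)))
      ≤ K₁ H * √((s + 1) / s) * t ^ (2 * H) := by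
  have hH : H + 1 / 2 ≠ 0 := by linarith
  calc _ = (4 * ((H - 1 / 2) * (3 / 2 - H) * (H + 1 / 2)))⁻¹ * √((s + 1) / s)
          * (t ^ (H - 1 / 2) * t ^ (H + 1 / 2)) := by
        rw [sqrt_div (by linarith)]
        field_simp
    _ ≤ K₁ H * √((s + 1) / s) * t ^ (2 * H) := by
        rw [← rpow_add ht, show H - 1 / 2 + (H + 1 / 2) = 2 * H by ring]
        gcongr
        exact inv_le_K₁ hH₁ hH₂

end Kernel

/-- For `H ∈ (1/2,1)`, `s > 0`, `t ∈ [0,1]`,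
`φ̃_t = φ_t · 1_S` with `S = {x > 0, −t−s < y < −s}` and
`K₁ = 3/(8H(2H−1)) + 1/(8H(3−2H)) + 1/(4H²−1)`, for every `n > 0`,
`I₂(n, φ̃_t) ≤ K₁ √((s+1)/s) t^{2H}`. -/
theorem stmt10 {H s : ℝ} (hH : H ∈ Set.Ioo (1 / 2 : ℝ) 1) (hs : 0 < s)
    {n : ℝ} (hn : 0 < n) (t : ℝ) (ht : t ∈ Set.Icc (0 : ℝ) 1) :
    I2 n (fun x y =>
        if 0 < x ∧ -t - s < y ∧ y < -s then gker s t x y / x ^ (2 - H) else 0)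
      ≤ (3 / (8 * H * (2 * H - 1)) + 1 / (8 * H * (3 - 2 * H)) + 1 / (4 * H ^ 2 - 1))
          * Real.sqrt ((s + 1) / s) * t ^ (2 * H) := by
  obtain ⟨hH₁, hH₂⟩ := hH
  obtain ⟨ht₀, ht₁⟩ := ht
  change I2 n (phiTilde H s t) ≤ K₁ H * √((s + 1) / s) * t ^ (2 * H)
  rcases ht₀.eq_or_lt with rfl | ht₀
  · simp [I2, phiTilde_zero_time, zero_rpow (by linarith : 2 * H ≠ 0)]
  have ha : 0 < H - 1 / 2 := by linarith
  have hb : 0 < 3 / 2 - H := by linarith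
  have hc : 0 < H + 1 / 2 := by linarith
  calc I2 n (phiTilde H s t)
      ≤ n ^ 2 * (√(s + 1) / (4 * n ^ 2 * √s) * (t ^ (H - 1 / 2) / ((H - 1 / 2) * (3 / 2 - H)))
          * (t ^ (H + 1 / 2) / (H + 1 / 2))) :=
        mul_le_mul_of_nonneg_left (integral_le_of_lintegral_ofReal_norm_le (by positivity)
          (setLIntegral_I2_integrand_le hH₁ (by linarith) hs ht₀ ht₁ hn)) (sq_nonneg n)
    _ ≤ K₁ H * √((s + 1) / s) * t ^ (2 * H) := sq_mul_I2_bound_le hH₁ hH₂ hs ht₀ hn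
end

section
/- Fix H ∈ (1/2,1) and s > 0. For 0 ≤ t ≤ 1 and a constant M ≤ −2−s, let Ḡ(M) = {(x,y) : −t−s−y < x, y ≤ M} and φ̄_t(x,y) = φ_t(x,y)·1_{Ḡ(M)}(x,y), where φ_t(x,y) = g_s(t,x,y)/x^{2−H}. Let K₂ = 1/(4(1−H)(3−2H)(2H−1)). Then there exists a constant C > 0, independent of t, M, H and n, such that for every n > 0, I₂(n, φ̄_t) ≤ K₂ C t^{2H}. -/
open MeasureTheory ProbabilityTheory Filter Topology

/-! On the support of `φ̄_t` we have `y₂ ≤ -(2 + s)`, `x₁ ≥ 1` and `|y₁| ≤ (2 + s) x₁`, while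
`0 ≤ g_s ≤ t`. Hence, with `a = 2 + s`, `u = -y₁` and `v = -y₂`, the integrand of `I₂` is
dominated by `t² √a · √v x₁^(2H-5/2) e^{-2n x₁ (u - v)} e^{-2n v (x₂ - x₁)}` on
`{a ≤ v ≤ u, v ≤ a x₁, x₁ ≤ x₂}`. Integrating out `u`, `x₂`, `x₁` and `v` in this order costs
`1/(2n x₁)`, `1/(2n v)` and two power tails, and leaves `I₂ ≤ t² a / (4 (5/2 - 2H)(2 - 2H))`.
This is at most `K₂ a t^{2H}` because `(3 - 2H)(2H - 1) ≤ 1` and `t² ≤ t^{2H}`. -/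

open Set Real
open scoped ENNReal

theorem gker_nonneg {t : ℝ} (ht : 0 ≤ t) (s x y : ℝ) : 0 ≤ gker s t x y := by
  have : max (min (s + y) 0 + x) 0 ≤ max (min (t + s + y) 0 + x) 0 := by
    gcongr; linarith
  unfold gker hker
  linarith

theorem gker_le {t : ℝ} (ht : 0 ≤ t) (s x y : ℝ) : gker s t x y ≤ t := by
  have hmin : min (t + s + y) 0 ≤ min (s + y) 0 + t := by
    rw [← min_add_add_right]; exact min_le_min (by linarith) (by linarith)
  have : max (min (t + s + y) 0 + x) 0 ≤ max (min (s + y) 0 + x) 0 + t :=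
    max_le (by linarith [le_max_left (min (s + y) 0 + x) 0])
      (by linarith [le_max_right (min (s + y) 0 + x) 0])
  unfold gker hker
  linarith

theorem gker_div_rpow_le {s t : ℝ} (ht : 0 ≤ t) {x : ℝ} (hx : 0 < x) (y H : ℝ) :
    gker s t x y / x ^ (2 - H) ≤ t * x ^ (H - 2) := by
  rw [show H - 2 = -(2 - H) by ring, rpow_neg hx.le, ← div_eq_mul_inv]
  exact div_le_div_of_nonneg_right (gker_le ht s x y) (by positivity)

theorem gker_div_rpow_mul_sqrt_le {s t H a x₁ y₁ x₂ y₂ : ℝ} (ht : 0 ≤ t) (hH : H ≤ 3 / 2)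
    (hx₁ : 0 < x₁) (hx : x₁ ≤ x₂) (hy₁ : y₁ ≤ 0) (hy₂ : y₂ ≤ 0) (ha : -y₁ ≤ a * x₁) :
    gker s t x₁ y₁ / x₁ ^ (2 - H) * (gker s t x₂ y₂ / x₂ ^ (2 - H)) * √(x₁ * |y₁|) *
        √(x₂ * |y₂|) ≤ t ^ 2 * √a * √(-y₂) * x₁ ^ (2 * H - 5 / 2) := by
  have hx₂ : 0 < x₂ := hx₁.trans_le hx
  have hφ₁ := gker_div_rpow_le (s := s) ht hx₁ y₁ H
  have hφ₂ := gker_div_rpow_le (s := s) ht hx₂ y₂ H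
  have hφ₂₀ : 0 ≤ gker s t x₂ y₂ / x₂ ^ (2 - H) :=
    div_nonneg (gker_nonneg ht s x₂ y₂) (by positivity)
  have hsqrt₁ : √(x₁ * |y₁|) ≤ √a * x₁ := by
    calc √(x₁ * |y₁|) ≤ √(a * x₁ ^ 2) := sqrt_le_sqrt (by rw [abs_of_nonpos hy₁]; nlinarith)
      _ = √a * x₁ := by rw [sqrt_mul' _ (sq_nonneg _), sqrt_sq hx₁.le]
  have hsqrt₂ : √(x₂ * |y₂|) = √x₂ * √(-y₂) := by rw [abs_of_nonpos hy₂, sqrt_mul hx₂.le]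
  have hpow : x₁ ^ (H - 2) * x₁ * (x₂ ^ (H - 2) * √x₂) ≤ x₁ ^ (2 * H - 5 / 2) := by
    rw [← rpow_add_one hx₁.ne', sqrt_eq_rpow, ← rpow_add hx₂]
    calc x₁ ^ (H - 2 + 1) * x₂ ^ (H - 2 + 1 / 2)
        ≤ x₁ ^ (H - 2 + 1) * x₁ ^ (H - 2 + 1 / 2) :=
          mul_le_mul_of_nonneg_left (rpow_le_rpow_of_nonpos hx₁ hx (by linarith)) (by positivity)
      _ = x₁ ^ (2 * H - 5 / 2) := by rw [← rpow_add hx₁]; ring_nf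
  calc gker s t x₁ y₁ / x₁ ^ (2 - H) * (gker s t x₂ y₂ / x₂ ^ (2 - H)) * √(x₁ * |y₁|) *
        √(x₂ * |y₂|)
      ≤ t * x₁ ^ (H - 2) * (t * x₂ ^ (H - 2)) * (√a * x₁) * (√x₂ * √(-y₂)) := by
        rw [hsqrt₂]
        gcongr
    _ = t ^ 2 * √a * √(-y₂) * (x₁ ^ (H - 2) * x₁ * (x₂ ^ (H - 2) * √x₂)) := by ring
    _ ≤ t ^ 2 * √a * √(-y₂) * x₁ ^ (2 * H - 5 / 2) := by gcongr

theorem lintegral_Ici_exp_neg_mul_sub {b : ℝ} (hb : 0 < b) (c : ℝ) :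
    ∫⁻ x in Ici c, ENNReal.ofReal (exp (-(b * (x - c)))) = ENNReal.ofReal b⁻¹ := by
  have hexp : ∀ x, exp (-(b * (x - c))) = exp (b * c) * exp (-b * x) := fun x => by
    rw [← exp_add]; ring_nf
  simp_rw [← restrict_Ioi_eq_restrict_Ici, hexp]
  rw [← ofReal_integral_eq_lintegral_ofReal
      ((integrableOn_exp_mul_Ioi (neg_lt_zero.2 hb) c).const_mul _)
      (Filter.Eventually.of_forall fun x => by positivity),
    integral_const_mul, integral_exp_mul_Ioi (neg_lt_zero.2 hb), neg_mul, exp_neg]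
  field_simp

theorem lintegral_Ici_rpow_of_lt {p : ℝ} (hp : p < -1) {c : ℝ} (hc : 0 < c) :
    ∫⁻ x in Ici c, ENNReal.ofReal (x ^ p) = ENNReal.ofReal (-c ^ (p + 1) / (p + 1)) := by
  rw [← restrict_Ioi_eq_restrict_Ici, ← ofReal_integral_eq_lintegral_ofReal
      (integrableOn_Ioi_rpow_of_lt hp hc)
      ((ae_restrict_mem measurableSet_Ioi).mono fun x hx => rpow_nonneg (hc.trans hx).le p),
    integral_Ioi_rpow_of_lt hp hc]

theorem lintegral_Ici_rpow_mul_inv {b p c : ℝ} (hb : 0 < b) (hp : p < 0) (hc : 0 < c) :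
    ∫⁻ x in Ici c, ENNReal.ofReal (x ^ p * (b * x)⁻¹) = ENNReal.ofReal (b⁻¹ * (-c ^ p / p)) := by
  rw [setLIntegral_congr_fun measurableSet_Ici fun x (hx : c ≤ x) => by
      rw [mul_inv, ← mul_assoc, mul_comm _ b⁻¹, mul_assoc, ← div_eq_mul_inv,
        ← rpow_sub_one (hc.trans_le hx).ne', ENNReal.ofReal_mul (by positivity)],
    lintegral_const_mul _ (by fun_prop), lintegral_Ici_rpow_of_lt (by linarith) hc,
    sub_add_cancel, ← ENNReal.ofReal_mul (by positivity)]

theorem lintegral_prod_prod_eq_iterated {α β γ δ : Type*} [MeasurableSpace α]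
    [MeasurableSpace β] [MeasurableSpace γ] [MeasurableSpace δ] {μ : Measure α} {ν : Measure β}
    {ρ : Measure γ} {κ : Measure δ} [SFinite μ] [SFinite ν] [SFinite ρ] [SFinite κ]
    {F : (α × β) × γ × δ → ℝ≥0∞} (hF : Measurable F) :
    ∫⁻ p, F p ∂(μ.prod ν).prod (ρ.prod κ) =
      ∫⁻ w, ∫⁻ x, ∫⁻ z, ∫⁻ y, F ((x, y), (z, w)) ∂ν ∂ρ ∂μ ∂κ := by
  have hF₂ (w : δ) (z : γ) : Measurable fun q : α × β => F (q, (z, w)) :=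
    hF.comp (measurable_id.prodMk measurable_const)
  rw [lintegral_prod_symm' _ hF, lintegral_prod_symm' _ (by fun_prop)]
  refine lintegral_congr fun w => ?_
  simp_rw [lintegral_prod _ (hF₂ w _).aemeasurable]
  exact lintegral_lintegral_swap (Measurable.lintegral_prod_right'
    (f := fun q : (γ × α) × β => F ((q.1.2, q.2), (q.1.1, w))) (by fun_prop)).aemeasurable

theorem setIntegral_le_of_ofReal_norm_le {α : Type*} [MeasurableSpace α] {μ : Measure α}
    {s : Set α} {f : α → ℝ} {g : α → ℝ≥0∞} (hg : Measurable g)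
    (hfg : ∀ x ∈ s, ENNReal.ofReal ‖f x‖ ≤ g x) {B : ℝ} (hB : 0 ≤ B)
    (hgB : ∫⁻ x, g x ∂μ ≤ ENNReal.ofReal B) : ∫ x in s, f x ∂μ ≤ B :=
  (le_abs_self _).trans <| (norm_integral_le_lintegral_norm _).trans <|
    ENNReal.toReal_le_of_le_ofReal hB <|
      (setLIntegral_mono hg hfg).trans <| (setLIntegral_le_lintegral _ _).trans hgB

noncomputable def majorant (a p n x₁ u x₂ v : ℝ) : ℝ≥0∞ :=
  (Ici a).indicator (fun v => ENNReal.ofReal √v) v *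
    (Ici (v / a)).indicator (fun x => ENNReal.ofReal (x ^ p)) x₁ *
    (Ici x₁).indicator (fun x => ENNReal.ofReal (exp (-(2 * n * v * (x - x₁))))) x₂ *
    (Ici v).indicator (fun x => ENNReal.ofReal (exp (-(2 * n * x₁ * (x - v))))) u

theorem measurable_majorant (a p n : ℝ) :
    Measurable fun q : (ℝ × ℝ) × ℝ × ℝ => majorant a p n q.1.1 q.1.2 q.2.1 q.2.2 := by
  unfold majorant
  simp only [indicator_apply, mem_Ici]
  refine ((Measurable.ite ?_ ?_ ?_).mul (Measurable.ite ?_ ?_ ?_)).mul (Measurable.ite ?_ ?_ ?_)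
    |>.mul (Measurable.ite ?_ ?_ ?_)
  all_goals first
    | exact measurableSet_le (by fun_prop) (by fun_prop)
    | fun_prop

theorem lintegral_lintegral_majorant {a n : ℝ} (ha : 0 < a) (hn : 0 < n) (p x₁ v : ℝ) :
    ∫⁻ x₂, ∫⁻ u, majorant a p n x₁ u x₂ v =
      (Ici a).indicator (fun v => ENNReal.ofReal (√v * (2 * n * v)⁻¹)) v *
        (Ici (v / a)).indicator (fun x => ENNReal.ofReal (x ^ p * (2 * n * x)⁻¹)) x₁ := by
  by_cases h : a ≤ v ∧ v / a ≤ x₁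
  · obtain ⟨hv, hx⟩ := h
    have hv₀ : 0 < v := ha.trans_le hv
    have hx₀ : 0 < x₁ := (div_pos hv₀ ha).trans_le hx
    have hexp (b c : ℝ) :
        Measurable ((Ici c).indicator fun x => ENNReal.ofReal (exp (-(b * (x - c))))) :=
      (by fun_prop : Measurable fun x => ENNReal.ofReal (exp (-(b * (x - c))))).indicator
        measurableSet_Ici
    simp only [majorant, indicator_of_mem (mem_Ici.2 hv), indicator_of_mem (mem_Ici.2 hx)]
    simp_rw [lintegral_const_mul _ (hexp _ _), lintegral_indicator measurableSet_Ici,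
      lintegral_Ici_exp_neg_mul_sub (by positivity : 0 < 2 * n * x₁)]
    rw [lintegral_mul_const _ ((hexp _ _).const_mul _), lintegral_const_mul _ (hexp _ _),
      lintegral_indicator measurableSet_Ici,
      lintegral_Ici_exp_neg_mul_sub (by positivity : 0 < 2 * n * v),
      ENNReal.ofReal_mul (sqrt_nonneg v), ENNReal.ofReal_mul (rpow_nonneg hx₀.le p)]
    ring
  · rw [not_and_or] at h
    rcases h with h | h <;> simp [majorant, h]

theorem lintegral_majorant {a n p : ℝ} (ha : 0 < a) (hn : 0 < n) (hp : p < -1 / 2) :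
    ∫⁻ q : (ℝ × ℝ) × ℝ × ℝ, majorant a p n q.1.1 q.1.2 q.2.1 q.2.2 =
      ENNReal.ofReal (√a / ((2 * n) ^ 2 * (p * (p + 1 / 2)))) := by
  rw [show (volume : Measure ((ℝ × ℝ) × ℝ × ℝ)) =
      (volume.prod volume).prod (volume.prod volume) from rfl,
    lintegral_prod_prod_eq_iterated (measurable_majorant a p n)]
  have hlint_x₁ (v : ℝ) : ∫⁻ x₁, (Ici a).indicator (fun v => ENNReal.ofReal (√v * (2 * n * v)⁻¹)) v *
      (Ici (v / a)).indicator (fun x => ENNReal.ofReal (x ^ p * (2 * n * x)⁻¹)) x₁ =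
      (Ici a).indicator
        (fun v => ENNReal.ofReal (√v * (2 * n * v)⁻¹ * ((2 * n)⁻¹ * (-(v / a) ^ p / p)))) v := by
    rw [lintegral_const_mul _ ((by fun_prop : Measurable fun x : ℝ =>
      ENNReal.ofReal (x ^ p * (2 * n * x)⁻¹)).indicator measurableSet_Ici),
      lintegral_indicator measurableSet_Ici]
    by_cases hv : a ≤ v
    · have hv₀ : 0 < v := ha.trans_le hv
      have : 0 ≤ -(v / a) ^ p / p :=
        div_nonneg_of_nonpos (neg_nonpos.2 (by positivity)) (by linarith)
      rw [indicator_of_mem (mem_Ici.2 hv), indicator_of_mem (mem_Ici.2 hv),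
        lintegral_Ici_rpow_mul_inv (by positivity) (by linarith) (div_pos hv₀ ha),
        ← ENNReal.ofReal_mul (by positivity)]
    · simp [hv]
  have hrpow (v : ℝ) (hv : a ≤ v) : √v * (2 * n * v)⁻¹ * ((2 * n)⁻¹ * (-(v / a) ^ p / p)) =
      ((2 * n) ^ 2)⁻¹ * (a ^ (-p) / -p) * v ^ (p - 1 / 2) := by
    have hv₀ : 0 < v := ha.trans_le hv
    rw [div_rpow hv₀.le ha.le, sqrt_eq_rpow, show p - 1 / 2 = 1 / 2 + p - 1 by ring,
      rpow_sub_one hv₀.ne', rpow_add hv₀, rpow_neg ha.le]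
    field_simp
  have hK : 0 ≤ ((2 * n) ^ 2)⁻¹ * (a ^ (-p) / -p) :=
    mul_nonneg (by positivity) (div_nonneg (rpow_nonneg ha.le _) (by linarith))
  have hp' : 0 < p * (p + 1 / 2) := mul_pos_of_neg_of_neg (by linarith) (by linarith)
  simp_rw [lintegral_lintegral_majorant ha hn, hlint_x₁, lintegral_indicator measurableSet_Ici]
  rw [setLIntegral_congr_fun measurableSet_Ici fun v hv => congrArg ENNReal.ofReal (hrpow v hv),
    lintegral_congr fun v => ENNReal.ofReal_mul hK,
    lintegral_const_mul' _ _ ENNReal.ofReal_ne_top, lintegral_Ici_rpow_of_lt (by linarith) ha,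
    ← ENNReal.ofReal_mul hK]
  congr 1
  rw [show p - 1 / 2 + 1 = p + 1 / 2 by ring, sqrt_eq_rpow, rpow_neg ha.le, rpow_add ha]
  field_simp

noncomputable def phiBar (s H t M x y : ℝ) : ℝ :=
  if -t - s - y < x ∧ y ≤ M then gker s t x y / x ^ (2 - H) else 0

theorem ofReal_norm_phiBar_integrand_le {s H t M n x₁ y₁ x₂ y₂ : ℝ} (hs : 0 < s)
    (hH : H ≤ 3 / 2)
    (ht : t ∈ Icc (0 : ℝ) 1) (hM : M ≤ -2 - s) (hx : x₁ ≤ x₂) (hy : y₁ < y₂) :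
    ENNReal.ofReal ‖phiBar s H t M x₁ y₁ * phiBar s H t M x₂ y₂ * √(x₁ * |y₁|) *
        √(x₂ * |y₂|) * exp (-2 * n * (x₁ * (y₂ - y₁) - (x₂ - x₁) * y₂))‖ ≤
      ENNReal.ofReal (t ^ 2 * √(2 + s)) *
        majorant (2 + s) (2 * H - 5 / 2) n x₁ (-y₁) x₂ (-y₂) := by
  obtain ⟨ht₀, ht₁⟩ := ht
  by_cases h : (-t - s - y₁ < x₁ ∧ y₁ ≤ M) ∧ -t - s - y₂ < x₂ ∧ y₂ ≤ M
  swap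
  · rw [not_and_or] at h
    rcases h with h | h <;> simp [phiBar, h]
  obtain ⟨⟨hx₁, hy₁⟩, hx₂, hy₂⟩ := h
  have hx₁₀ : 0 < x₁ := by linarith
  have ha : -y₁ ≤ (2 + s) * x₁ := by nlinarith
  have hv : -y₂ / (2 + s) ≤ x₁ := by rw [div_le_iff₀ (by positivity)]; linarith
  have hE : exp (-2 * n * (x₁ * (y₂ - y₁) - (x₂ - x₁) * y₂)) =
      exp (-(2 * n * -y₂ * (x₂ - x₁))) * exp (-(2 * n * x₁ * (-y₁ - -y₂))) := by
    rw [← exp_add]; ring_nf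
  rw [majorant, indicator_of_mem (mem_Ici.2 (by linarith)), indicator_of_mem (mem_Ici.2 hv),
    indicator_of_mem (mem_Ici.2 hx), indicator_of_mem (mem_Ici.2 (by linarith)),
    ← ENNReal.ofReal_mul (sqrt_nonneg _), ← ENNReal.ofReal_mul (by positivity),
    ← ENNReal.ofReal_mul (by positivity), ← ENNReal.ofReal_mul (by positivity)]
  refine ENNReal.ofReal_le_ofReal ?_
  have hbound := gker_div_rpow_mul_sqrt_le (s := s) (y₂ := y₂) ht₀ hH hx₁₀ hx (by linarith)
    (by linarith) ha
  have hφ (x y : ℝ) (hx : 0 < x) : 0 ≤ gker s t x y / x ^ (2 - H) :=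
    div_nonneg (gker_nonneg ht₀ s x y) (by positivity)
  have hφ₁ := hφ x₁ y₁ hx₁₀
  have hφ₂ := hφ x₂ y₂ (hx₁₀.trans_le hx)
  simp only [phiBar, if_pos (And.intro hx₁ hy₁), if_pos (And.intro hx₂ hy₂), hE]
  rw [norm_of_nonneg (by positivity)]
  calc _ = gker s t x₁ y₁ / x₁ ^ (2 - H) * (gker s t x₂ y₂ / x₂ ^ (2 - H)) * √(x₁ * |y₁|) *
        √(x₂ * |y₂|) * (exp (-(2 * n * -y₂ * (x₂ - x₁))) * exp (-(2 * n * x₁ * (-y₁ - -y₂)))) := by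
        ring
    _ ≤ t ^ 2 * √(2 + s) * √(-y₂) * x₁ ^ (2 * H - 5 / 2) *
        (exp (-(2 * n * -y₂ * (x₂ - x₁))) * exp (-(2 * n * x₁ * (-y₁ - -y₂)))) := by gcongr
    _ = _ := by ring

theorem I2_phiBar_le {s H t M n : ℝ} (hs : 0 < s) (hH : H < 1) (ht : t ∈ Icc (0 : ℝ) 1)
    (hM : M ≤ -2 - s) (hn : 0 < n) :
    I2 n (phiBar s H t M) ≤
      t ^ 2 * (2 + s) / (4 * ((2 * H - 5 / 2) * (2 * H - 5 / 2 + 1 / 2))) := by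
  set a := 2 + s
  set p := 2 * H - 5 / 2 with hp
  have hneg : MeasurePreserving (Prod.map (Prod.map id Neg.neg) (Prod.map id Neg.neg))
      (volume : Measure ((ℝ × ℝ) × ℝ × ℝ)) volume :=
    (MeasurePreserving.id volume).prod (Measure.measurePreserving_neg volume) |>.prod <|
      (MeasurePreserving.id volume).prod (Measure.measurePreserving_neg volume)
  have hmaj : ∫⁻ q : (ℝ × ℝ) × ℝ × ℝ,
      ENNReal.ofReal (t ^ 2 * √a) * majorant a p n q.1.1 (-q.1.2) q.2.1 (-q.2.2) =
      ENNReal.ofReal (t ^ 2 * √a * (√a / ((2 * n) ^ 2 * (p * (p + 1 / 2))))) := by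
    have := hneg.lintegral_comp (measurable_majorant a p n)
    simp only [Prod.map_fst, Prod.map_snd, id] at this
    rw [lintegral_const_mul' _ _ ENNReal.ofReal_ne_top, this,
      lintegral_majorant (by positivity) hn (by linarith [hp]),
      ← ENNReal.ofReal_mul (by positivity)]
  have hp' : 0 < p * (p + 1 / 2) := mul_pos_of_neg_of_neg (by linarith) (by linarith)
  refine (mul_le_mul_of_nonneg_left (setIntegral_le_of_ofReal_norm_le
    (((measurable_majorant a p n).comp hneg.measurable).const_mul _)
    (fun q hq => ofReal_norm_phiBar_integrand_le hs (by linarith) ht hM hq.2.1 hq.2.2.1)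
    (by positivity)
    hmaj.le) (sq_nonneg n)).trans_eq ?_
  rw [mul_assoc, mul_div_assoc', mul_self_sqrt (by positivity)]
  field_simp
  ring

/-- For fixed `s > 0` there is a constant `C > 0`, independent of
`t`, `M`, `H` and `n`, such that for all `H ∈ (1/2,1)`, `t ∈ [0,1]`, `M ≤ −2−s` and
`n > 0`, with `φ̄_t = φ_t · 1_{Ḡ(M)}`, `Ḡ(M) = {−t−s−y < x, y ≤ M}` and
`K₂ = 1/(4(1−H)(3−2H)(2H−1))`, one has `I₂(n, φ̄_t) ≤ K₂ C t^{2H}`. -/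
theorem stmt12 {s : ℝ} (hs : 0 < s) :
    ∃ C : ℝ, 0 < C ∧ ∀ H ∈ Set.Ioo (1 / 2 : ℝ) 1, ∀ t ∈ Set.Icc (0 : ℝ) 1,
      ∀ M : ℝ, M ≤ -2 - s → ∀ n : ℝ, 0 < n →
        I2 n (fun x y =>
            if -t - s - y < x ∧ y ≤ M then gker s t x y / x ^ (2 - H) else 0)
          ≤ 1 / (4 * (1 - H) * (3 - 2 * H) * (2 * H - 1)) * C * t ^ (2 * H) := by
  refine ⟨2 + s, by positivity, fun H ⟨hH₁, hH₂⟩ t ht M hM n hn => ?_⟩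
  have ht₂ : t ^ 2 ≤ t ^ (2 * H) := by
    rw [← rpow_two]
    exact rpow_le_rpow_of_exponent_ge' ht.1 ht.2 (by linarith) (by linarith)
  have hK : (1 - H) * (3 - 2 * H) * (2 * H - 1) ≤ (2 * H - 5 / 2) * (2 * H - 5 / 2 + 1 / 2) := by
    nlinarith [mul_nonneg (mul_nonneg (sub_nonneg.2 hH₂.le) (sub_nonneg.2 hH₂.le))
      (by linarith : (0 : ℝ) ≤ 2 - H)]
  have : 0 < (1 - H) * (3 - 2 * H) * (2 * H - 1) := by
    apply mul_pos (mul_pos _ _) _ <;> linarith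
  have := rpow_nonneg ht.1 (2 * H)
  calc I2 n (phiBar s H t M)
      ≤ t ^ 2 * (2 + s) / (4 * ((2 * H - 5 / 2) * (2 * H - 5 / 2 + 1 / 2))) :=
        I2_phiBar_le hs hH₂ ht hM hn
    _ ≤ t ^ (2 * H) * (2 + s) / (4 * ((1 - H) * (3 - 2 * H) * (2 * H - 1))) := by
        gcongr ?_ * _ / (4 * ?_)
    _ = 1 / (4 * (1 - H) * (3 - 2 * H) * (2 * H - 1)) * (2 + s) * t ^ (2 * H) := by ring
end

section
/- Fix H ∈ (1/2,1) and s > 0, and let C_H = H(2H−1)(1−H)(3−2H). Then for every t ≥ 0, C_H ∫₀^∞ ∫_{−∞}^0 g_s(t,x,y)² · x^{2H−4} dx dy = t^{2H} / 2. -/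
/-!
After the substitution `v = -s - y`, for `x > 0` the function `y ↦ g_s(t,x,y)` is the
trapezoid `v ↦ |[0,t] ∩ [v - x, v]|`, which rises with slope one to the plateau
`m = min(t,x)` on `[m, M]`, `M = max(t,x)`, and falls back to zero at `t + x`. Since `s ≥ 0`
its support lies in `y ≤ 0`, so the inner integral is `∫ trapezoid² = m²M - m³/3`. Splitting
the outer integral at `x = t` leaves four power integrals, which sum to
`2 t^{2H} / ((2H-3)(2H-2)(2H-1)2H) = t^{2H} / (2 C_H)`.
-/

open MeasureTheory ProbabilityTheory Filter Topology

section Trapezoid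

def trapezoid (m M v : ℝ) : ℝ := max 0 (min (min v m) (m + M - v))

variable {m M v : ℝ}

theorem continuous_trapezoid (m M : ℝ) : Continuous (trapezoid m M) := by
  unfold trapezoid; fun_prop

theorem trapezoid_of_nonpos (hv : v ≤ 0) : trapezoid m M v = 0 :=
  max_eq_left ((min_le_left _ _).trans ((min_le_left _ _).trans hv))

theorem trapezoid_of_le (hv : m + M ≤ v) : trapezoid m M v = 0 :=
  max_eq_left ((min_le_right _ _).trans (by linarith))

theorem trapezoid_of_mem_Icc_left (hmM : m ≤ M) (hv : v ∈ Set.Icc 0 m) :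
    trapezoid m M v = v := by
  obtain ⟨h0, hm⟩ := hv
  unfold trapezoid
  rw [min_eq_left hm, min_eq_left (by linarith), max_eq_right h0]

theorem trapezoid_of_mem_Icc_middle (hm : 0 ≤ m) (hv : v ∈ Set.Icc m M) :
    trapezoid m M v = m := by
  obtain ⟨hmv, hvM⟩ := hv
  unfold trapezoid
  rw [min_eq_right hmv, min_eq_left (by linarith), max_eq_right hm]

theorem trapezoid_of_mem_Icc_right (hmM : m ≤ M) (hv : v ∈ Set.Icc M (m + M)) :
    trapezoid m M v = m + M - v := by
  obtain ⟨hMv, hv⟩ := hv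
  unfold trapezoid
  rw [min_eq_right (by linarith : m ≤ v), min_eq_right (by linarith : m + M - v ≤ m),
    max_eq_right (by linarith)]

theorem integral_trapezoid_sq (hm : 0 ≤ m) (hmM : m ≤ M) :
    ∫ v, trapezoid m M v ^ 2 = m ^ 2 * M - m ^ 3 / 3 := by
  have hsupp : ∀ v ∉ Set.Ioc 0 (m + M), trapezoid m M v ^ 2 = 0 := by
    intro v hv
    rcases not_and_or.mp hv with hv | hv
    · rw [trapezoid_of_nonpos (not_lt.mp hv), zero_pow two_ne_zero]
    · rw [trapezoid_of_le (not_le.mp hv).le, zero_pow two_ne_zero]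
  have hint : ∀ a b : ℝ, IntervalIntegrable (fun v => trapezoid m M v ^ 2) volume a b :=
    fun a b => ((continuous_trapezoid m M).pow 2).intervalIntegrable a b
  have left : ∫ v in 0..m, trapezoid m M v ^ 2 = m ^ 3 / 3 := by
    rw [intervalIntegral.integral_congr (g := fun v => v ^ 2), integral_pow]
    · ring
    · intro v hv
      rw [Set.uIcc_of_le hm] at hv
      simp only [trapezoid_of_mem_Icc_left hmM hv]
  have middle : ∫ v in m..M, trapezoid m M v ^ 2 = (M - m) * m ^ 2 := by
    rw [intervalIntegral.integral_congr (g := fun _ => m ^ 2), intervalIntegral.integral_const,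
      smul_eq_mul]
    intro v hv
    rw [Set.uIcc_of_le hmM] at hv
    simp only [trapezoid_of_mem_Icc_middle hm hv]
  have right : ∫ v in M..(m + M), trapezoid m M v ^ 2 = m ^ 3 / 3 := by
    rw [intervalIntegral.integral_congr (g := fun v => (m + M - v) ^ 2),
      intervalIntegral.integral_comp_sub_left (fun v => v ^ 2), add_sub_cancel_right, sub_self,
      integral_pow]
    · ring
    · intro v hv
      rw [Set.uIcc_of_le (by linarith)] at hv
      simp only [trapezoid_of_mem_Icc_right hmM hv]
  rw [← setIntegral_eq_integral_of_forall_compl_eq_zero hsupp,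
    ← intervalIntegral.integral_of_le (by linarith),
    ← intervalIntegral.integral_add_adjacent_intervals (hint 0 m) (hint m (m + M)),
    ← intervalIntegral.integral_add_adjacent_intervals (hint m M) (hint M (m + M)),
    left, middle, right]
  ring

end Trapezoid

theorem gker_eq_trapezoid {t x : ℝ} (ht : 0 ≤ t) (hx : 0 ≤ x) (s y : ℝ) :
    gker s t x y = trapezoid (min t x) (max t x) (-s - y) := by
  rw [gker, hker, hker, trapezoid, min_add_max]
  grind

noncomputable def sqIntegralTrapezoid (t x : ℝ) : ℝ := min t x ^ 2 * max t x - min t x ^ 3 / 3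

theorem integral_Iic_gker_sq {s t x : ℝ} (hs : 0 ≤ s) (ht : 0 ≤ t) (hx : 0 ≤ x) :
    ∫ y in Set.Iic 0, gker s t x y ^ 2 = sqIntegralTrapezoid t x := by
  simp only [gker_eq_trapezoid ht hx]
  rw [sqIntegralTrapezoid, setIntegral_eq_integral_of_forall_compl_eq_zero,
    integral_sub_left_eq_self (fun v => trapezoid (min t x) (max t x) v ^ 2),
    integral_trapezoid_sq (le_min ht hx) min_le_max]
  intro y hy
  rw [trapezoid_of_nonpos (by linarith [Set.notMem_Iic.mp hy]), zero_pow two_ne_zero]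

section PowerIntegrals

variable {a t x : ℝ}

theorem sqIntegralTrapezoid_mul_rpow_of_mem_Ioc (hx : x ∈ Set.Ioc 0 t) :
    sqIntegralTrapezoid t x * x ^ a
      = t * x ^ (a + 2) - x ^ (a + 3) / 3 := by
  obtain ⟨hx, hxt⟩ := hx
  rw [sqIntegralTrapezoid, min_eq_right hxt, max_eq_left hxt, Real.rpow_add hx, Real.rpow_add hx,
    Real.rpow_ofNat, Real.rpow_ofNat]
  ring

theorem sqIntegralTrapezoid_mul_rpow_of_mem_Ioi (ht : 0 < t) (hx : x ∈ Set.Ioi t) :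
    sqIntegralTrapezoid t x * x ^ a
      = t ^ 2 * x ^ (a + 1) - t ^ 3 / 3 * x ^ a := by
  rw [sqIntegralTrapezoid, min_eq_left (le_of_lt hx), max_eq_right (le_of_lt hx),
    Real.rpow_add_one (ht.trans hx).ne']
  ring

theorem integrableOn_Ioc_sqIntegralTrapezoid_mul_rpow (ha : -3 < a) (ht : 0 ≤ t) :
    IntegrableOn (fun x => sqIntegralTrapezoid t x * x ^ a) (Set.Ioc 0 t) := by
  refine IntegrableOn.congr_fun ?_ (fun x hx => (sqIntegralTrapezoid_mul_rpow_of_mem_Ioc hx).symm)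
    measurableSet_Ioc
  exact (intervalIntegrable_iff_integrableOn_Ioc_of_le ht).mp
    (((intervalIntegral.intervalIntegrable_rpow' (by linarith)).const_mul t).sub
      ((intervalIntegral.intervalIntegrable_rpow' (by linarith)).div_const 3))

theorem integral_Ioc_sqIntegralTrapezoid_mul_rpow (ha : -3 < a) (ht : 0 < t) :
    ∫ x in Set.Ioc 0 t, sqIntegralTrapezoid t x * x ^ a
      = t ^ (a + 4) * (1 / (a + 3) - 1 / (3 * (a + 4))) := by
  have hint : ∀ r : ℝ, -1 < r → IntervalIntegrable (fun x => x ^ r) volume 0 t :=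
    fun r hr => intervalIntegral.intervalIntegrable_rpow' hr
  rw [setIntegral_congr_fun measurableSet_Ioc fun x => sqIntegralTrapezoid_mul_rpow_of_mem_Ioc,
    ← intervalIntegral.integral_of_le ht.le, intervalIntegral.integral_sub
      ((hint (a + 2) (by linarith)).const_mul t) ((hint (a + 3) (by linarith)).div_const 3),
    intervalIntegral.integral_const_mul, intervalIntegral.integral_div,
    integral_rpow (Or.inl (by linarith)), integral_rpow (Or.inl (by linarith)),
    Real.zero_rpow (by linarith), Real.zero_rpow (by linarith),
    show a + 3 + 1 = a + 4 by ring, show a + 2 + 1 = a + 3 by ring]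
  simp only [Real.rpow_add ht, Real.rpow_ofNat]
  field_simp
  ring

theorem integrableOn_Ioi_sqIntegralTrapezoid_mul_rpow (ha : a < -2) (ht : 0 < t) :
    IntegrableOn (fun x => sqIntegralTrapezoid t x * x ^ a) (Set.Ioi t) := by
  refine IntegrableOn.congr_fun ?_
    (fun x hx => (sqIntegralTrapezoid_mul_rpow_of_mem_Ioi ht hx).symm) measurableSet_Ioi
  exact ((integrableOn_Ioi_rpow_of_lt (by linarith) ht).const_mul _).sub
    ((integrableOn_Ioi_rpow_of_lt (by linarith) ht).const_mul _)

theorem integral_Ioi_sqIntegralTrapezoid_mul_rpow (ha : a < -2) (ht : 0 < t) :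
    ∫ x in Set.Ioi t, sqIntegralTrapezoid t x * x ^ a
      = t ^ (a + 4) * (1 / (3 * (a + 1)) - 1 / (a + 2)) := by
  have hint : ∀ r : ℝ, r < -1 → IntegrableOn (fun x => x ^ r) (Set.Ioi t) :=
    fun r hr => integrableOn_Ioi_rpow_of_lt hr ht
  rw [setIntegral_congr_fun measurableSet_Ioi fun x => sqIntegralTrapezoid_mul_rpow_of_mem_Ioi ht,
    integral_sub ((hint (a + 1) (by linarith)).const_mul _) ((hint a (by linarith)).const_mul _),
    integral_const_mul, integral_const_mul, integral_Ioi_rpow_of_lt (by linarith) ht,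
    integral_Ioi_rpow_of_lt (by linarith) ht, show a + 1 + 1 = a + 2 by ring]
  simp only [Real.rpow_add ht, Real.rpow_ofNat, Real.rpow_one]
  field_simp
  ring

theorem integral_Ioi_zero_sqIntegralTrapezoid_mul_rpow (ha₁ : -3 < a) (ha₂ : a < -2)
    (ht : 0 < t) :
    ∫ x in Set.Ioi 0, sqIntegralTrapezoid t x * x ^ a
      = 2 * t ^ (a + 4) / ((a + 1) * (a + 2) * (a + 3) * (a + 4)) := by
  rw [← Set.Ioc_union_Ioi_eq_Ioi ht.le, setIntegral_union (Set.Ioc_disjoint_Ioi le_rfl)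
      measurableSet_Ioi (integrableOn_Ioc_sqIntegralTrapezoid_mul_rpow ha₁ ht.le)
      (integrableOn_Ioi_sqIntegralTrapezoid_mul_rpow ha₂ ht),
    integral_Ioc_sqIntegralTrapezoid_mul_rpow ha₁ ht,
    integral_Ioi_sqIntegralTrapezoid_mul_rpow ha₂ ht]
  have : a + 1 ≠ 0 := by linarith
  have : a + 2 ≠ 0 := by linarith
  have : a + 3 ≠ 0 := by linarith
  have : a + 4 ≠ 0 := by linarith
  field_simp
  ring

end PowerIntegrals

/-- For `H ∈ (1/2,1)`, `s > 0` and `C_H = H(2H−1)(1−H)(3−2H)`, for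
every `t ≥ 0`, `C_H ∫₀^∞∫_{−∞}^0 g_s(t,x,y)² x^{2H−4} dx dy = t^{2H}/2`. -/
theorem stmt14 {H s : ℝ} (hH : H ∈ Set.Ioo (1 / 2 : ℝ) 1) (hs : 0 < s)
    (t : ℝ) (ht : 0 ≤ t) :
    CH H * ∫ x in Set.Ioi (0 : ℝ), ∫ y in Set.Iic (0 : ℝ),
        (gker s t x y) ^ 2 * x ^ (2 * H - 4)
      = t ^ (2 * H) / 2 := by
  obtain ⟨hH₁, hH₂⟩ := hH
  have inner : ∀ x ∈ Set.Ioi (0 : ℝ), ∫ y in Set.Iic 0, gker s t x y ^ 2 * x ^ (2 * H - 4)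
      = sqIntegralTrapezoid t x * x ^ (2 * H - 4) := fun x hx => by
    rw [integral_mul_const, integral_Iic_gker_sq hs.le ht (le_of_lt hx)]
  rw [setIntegral_congr_fun measurableSet_Ioi inner]
  rcases ht.eq_or_lt with rfl | ht
  · have vanish : ∀ x ∈ Set.Ioi (0 : ℝ),
        sqIntegralTrapezoid 0 x * x ^ (2 * H - 4) = 0 := fun x hx => by
      rw [sqIntegralTrapezoid, min_eq_left (le_of_lt hx)]
      ring
    rw [setIntegral_congr_fun measurableSet_Ioi vanish, integral_zero, mul_zero,
      Real.zero_rpow (by linarith), zero_div]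
  · have hCH : 0 < CH H := by
      unfold CH
      exact mul_pos (mul_pos (mul_pos (by linarith) (by linarith)) (by linarith)) (by linarith)
    have denom : (2 * H - 4 + 1) * (2 * H - 4 + 2) * (2 * H - 4 + 3) * (2 * H - 4 + 4)
        = 4 * CH H := by
      unfold CH
      ring
    rw [integral_Ioi_zero_sqIntegralTrapezoid_mul_rpow (by linarith) (by linarith) ht, denom,
      show 2 * H - 4 + 4 = 2 * H by ring]
    field_simp
    ring
end

section
/- Fix H ∈ (1/2,1) and s > 0, and let C_H = H(2H−1)(1−H)(3−2H). Then for all t, t' ≥ 0, 2 C_H ∫₀^∞ ∫_{−∞}^0 g_s(t,x,y) g_s(t',x,y) x^{2H−4} dx dy = ½( t^{2H} + t'^{2H} − |t − t'|^{2H} ); that is, the kernel √(2C_H) g_s(t,x,y) x^{H−2} reproduces the covariance of fractional Brownian motion with Hurst index H. -/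
open MeasureTheory ProbabilityTheory Filter Topology

/-!
For `t, x ≥ 0`, `g_s(t, x, y)` is the length `ℓ_t(y + s)` of `[y + s, y + s + t] ∩ [-x, 0]`,
which vanishes for `y ≥ -s`. Since `ℓ_t(u) = ℓ_{t'}(u) + ℓ_{t - t'}(u + t')` for `t' ≤ t`,
polarization and translation invariance give
`∫ ℓ_t ℓ_{t'} = (Q(t, x) + Q(t', x) - Q(|t - t'|, x)) / 2`,
where `Q(τ, x) = ∫ ℓ_τ² = m² M - m³ / 3` with `m = min τ x`, `M = max τ x`
(the graph of `ℓ_τ` is a trapezoid). Splitting at `x = τ`,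
`∫₀^∞ x^{2H-4} Q(τ, x) dx = τ^{2H} (1/(2H-1) - 1/(6H) + 1/(2-2H) - 1/(3(3-2H)))`,
and the bracket is `1 / (2 C_H)`.
-/

open Set

noncomputable section

def overlapLength (t x u : ℝ) : ℝ := max 0 (min (u + t) 0 - max u (-x))

lemma overlapLength_eq_sub {t x : ℝ} (ht : 0 ≤ t) (hx : 0 ≤ x) (u : ℝ) :
    overlapLength t x u = max (min (u + t) 0 + x) 0 - max (min u 0 + x) 0 := by
  simp only [overlapLength, min_def, max_def]
  split_ifs <;> linarith

lemma gker_eq_overlapLength {t x : ℝ} (ht : 0 ≤ t) (hx : 0 ≤ x) (s y : ℝ) :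
    gker s t x y = overlapLength t x (y + s) := by
  rw [overlapLength_eq_sub ht hx, gker, hker, hker, show y + s + t = t + s + y by ring,
    add_comm y s]
  ring

lemma overlapLength_add {t t' x : ℝ} (ht : 0 ≤ t) (ht' : 0 ≤ t') (hx : 0 ≤ x) (u : ℝ) :
    overlapLength (t + t') x u = overlapLength t' x u + overlapLength t x (u + t') := by
  rw [overlapLength_eq_sub (add_nonneg ht ht') hx, overlapLength_eq_sub ht' hx,
    overlapLength_eq_sub ht hx, show u + (t + t') = u + t' + t by ring]
  ring

lemma overlapLength_of_nonneg {u : ℝ} (hu : 0 ≤ u) (t x : ℝ) : overlapLength t x u = 0 := by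
  simp only [overlapLength, min_def, max_def]
  split_ifs <;> linarith

lemma overlapLength_of_le {t x u : ℝ} (hu : u ≤ -t - x) : overlapLength t x u = 0 := by
  simp only [overlapLength, min_def, max_def]
  split_ifs <;> linarith

lemma continuous_overlapLength (t x : ℝ) : Continuous (overlapLength t x) := by
  unfold overlapLength; fun_prop

lemma hasCompactSupport_overlapLength (t x : ℝ) : HasCompactSupport (overlapLength t x) :=
  HasCompactSupport.intro (isCompact_Icc (a := -t - x) (b := 0)) fun u hu => by
    rcases not_and_or.mp hu with h | h
    · exact overlapLength_of_le (not_le.mp h).le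
    · exact overlapLength_of_nonneg (not_le.mp h).le t x

lemma integrable_overlapLength_mul (t t' x : ℝ) :
    Integrable fun u => overlapLength t x u * overlapLength t' x u :=
  ((continuous_overlapLength t x).mul
    (continuous_overlapLength t' x)).integrable_of_hasCompactSupport
      (hasCompactSupport_overlapLength t' x).mul_left

lemma integrable_overlapLength_sq (t x : ℝ) : Integrable fun u => overlapLength t x u ^ 2 := by
  simpa only [sq] using integrable_overlapLength_mul t t x

def overlapSqIntegral (t x : ℝ) : ℝ := min t x ^ 2 * max t x - min t x ^ 3 / 3

section Pieces

variable {t x u : ℝ}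

lemma overlapLength_of_mem_ramp (h₁ : -t - x ≤ u) (h₂ : u ≤ -max t x) :
    overlapLength t x u = u + (t + x) := by
  rcases le_total t x with h | h <;>
    simp only [overlapLength, max_def, min_def] at * <;> split_ifs at * <;> linarith

lemma overlapLength_of_mem_plateau (ht : 0 ≤ t) (hx : 0 ≤ x)
    (h₁ : -max t x ≤ u) (h₂ : u ≤ -min t x) : overlapLength t x u = min t x := by
  rcases le_total t x with h | h <;>
    simp only [overlapLength, max_def, min_def] at * <;> split_ifs at * <;> linarith

lemma overlapLength_of_mem_slope (h₁ : -min t x ≤ u) (h₂ : u ≤ 0) :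
    overlapLength t x u = -u := by
  rcases le_total t x with h | h <;>
    simp only [overlapLength, max_def, min_def] at * <;> split_ifs at * <;> linarith

end Pieces

lemma integral_overlapLength_sq {t x : ℝ} (ht : 0 ≤ t) (hx : 0 ≤ x) :
    ∫ u, overlapLength t x u ^ 2 = overlapSqIntegral t x := by
  set m := min t x
  set M := max t x
  have hm : 0 ≤ m := le_min ht hx
  have hmM : m ≤ M := min_le_max
  have hsum : m + M = t + x := min_add_max t x
  have hI (a b : ℝ) : IntervalIntegrable (fun u => overlapLength t x u ^ 2) volume a b :=
    ((continuous_overlapLength t x).pow 2).intervalIntegrable a b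
  have hzero : ∀ u ∉ Ioc (-t - x) 0, overlapLength t x u ^ 2 = 0 := fun u hu => by
    rcases not_and_or.mp hu with h | h
    · rw [overlapLength_of_le (not_lt.mp h), zero_pow two_ne_zero]
    · rw [overlapLength_of_nonneg (not_le.mp h).le, zero_pow two_ne_zero]
  have ramp : ∫ u in (-t - x)..(-M), overlapLength t x u ^ 2 = m ^ 3 / 3 := by
    rw [intervalIntegral.integral_congr (g := fun u => (u + (t + x)) ^ 2) fun u hu => by
        rw [uIcc_of_le (by linarith)] at hu
        rw [overlapLength_of_mem_ramp hu.1 hu.2],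
      intervalIntegral.integral_comp_add_right (fun v => v ^ 2), integral_pow,
      show -t - x + (t + x) = 0 by ring, show -M + (t + x) = m by linarith]
    ring
  have plateau : ∫ u in (-M)..(-m), overlapLength t x u ^ 2 = m ^ 2 * (M - m) := by
    rw [intervalIntegral.integral_congr (g := fun _ => m ^ 2) fun u hu => by
        rw [uIcc_of_le (by linarith)] at hu
        rw [overlapLength_of_mem_plateau ht hx hu.1 hu.2],
      intervalIntegral.integral_const, smul_eq_mul]
    ring
  have slope : ∫ u in (-m)..0, overlapLength t x u ^ 2 = m ^ 3 / 3 := by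
    rw [intervalIntegral.integral_congr (g := fun u => u ^ 2) fun u hu => by
        rw [uIcc_of_le (by linarith)] at hu
        rw [overlapLength_of_mem_slope hu.1 hu.2, neg_sq],
      integral_pow]
    ring
  rw [← setIntegral_eq_integral_of_forall_compl_eq_zero hzero,
    ← intervalIntegral.integral_of_le (by linarith),
    ← intervalIntegral.integral_add_adjacent_intervals (hI _ (-M)) (hI _ 0),
    ← intervalIntegral.integral_add_adjacent_intervals (hI (-M) (-m)) (hI _ 0),
    ramp, plateau, slope, overlapSqIntegral]
  ring

lemma integral_overlapLength_mul_of_le {t t' x : ℝ} (ht' : 0 ≤ t') (htt' : t' ≤ t)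
    (hx : 0 ≤ x) : ∫ u, overlapLength t x u * overlapLength t' x u =
      (overlapSqIntegral t x + overlapSqIntegral t' x - overlapSqIntegral (t - t') x) / 2 := by
  have hd : 0 ≤ t - t' := sub_nonneg.mpr htt'
  have polarization : (fun u => overlapLength t x u * overlapLength t' x u) = fun u =>
      (overlapLength t x u ^ 2 + overlapLength t' x u ^ 2
        - overlapLength (t - t') x (u + t') ^ 2) / 2 := by
    funext u
    rw [← sub_add_cancel t t', overlapLength_add hd ht' hx, add_sub_cancel_right]
    ring
  have hsum : Integrable fun u => overlapLength t x u ^ 2 + overlapLength t' x u ^ 2 :=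
    (integrable_overlapLength_sq t x).add (integrable_overlapLength_sq t' x)
  rw [polarization, integral_div,
    integral_sub hsum ((integrable_overlapLength_sq (t - t') x).comp_add_right t'),
    integral_add (integrable_overlapLength_sq t x) (integrable_overlapLength_sq t' x),
    integral_add_right_eq_self (fun u => overlapLength (t - t') x u ^ 2) t',
    integral_overlapLength_sq (ht'.trans htt') hx, integral_overlapLength_sq ht' hx,
    integral_overlapLength_sq hd hx]

lemma integral_overlapLength_mul {t t' x : ℝ} (ht : 0 ≤ t) (ht' : 0 ≤ t') (hx : 0 ≤ x) :
    ∫ u, overlapLength t x u * overlapLength t' x u =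
      (overlapSqIntegral t x + overlapSqIntegral t' x - overlapSqIntegral |t - t'| x) / 2 := by
  rcases le_total t' t with h | h
  · rw [integral_overlapLength_mul_of_le ht' h hx, abs_of_nonneg (sub_nonneg.mpr h)]
  · simp_rw [mul_comm (overlapLength t x _)]
    rw [integral_overlapLength_mul_of_le ht h hx, abs_sub_comm, abs_of_nonneg (sub_nonneg.mpr h)]
    ring

lemma setIntegral_gker_mul_gker {s t t' x : ℝ} (hs : 0 ≤ s) (ht : 0 ≤ t) (ht' : 0 ≤ t')
    (hx : 0 ≤ x) : ∫ y in Iic 0, gker s t x y * gker s t' x y =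
      (overlapSqIntegral t x + overlapSqIntegral t' x - overlapSqIntegral |t - t'| x) / 2 := by
  have hzero : ∀ y ∉ Iic (0 : ℝ),
      overlapLength t x (y + s) * overlapLength t' x (y + s) = 0 := fun y hy => by
    rw [mem_Iic, not_le] at hy
    rw [overlapLength_of_nonneg (by linarith), zero_mul]
  simp_rw [gker_eq_overlapLength ht hx, gker_eq_overlapLength ht' hx]
  rw [setIntegral_eq_integral_of_forall_compl_eq_zero hzero,
    integral_add_right_eq_self (fun u => overlapLength t x u * overlapLength t' x u) s,
    integral_overlapLength_mul ht ht' hx]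

lemma rpow_mul_pow_of_add_eq {x a b : ℝ} {n : ℕ} (hx : x ≠ 0) (h : a + n = b) :
    x ^ a * x ^ n = x ^ b := by
  rw [← h, Real.rpow_add_natCast hx]

section OuterIntegral

variable {H τ : ℝ}

lemma rpow_mul_overlapSqIntegral_of_le {x : ℝ} (hx : 0 < x) (hxτ : x ≤ τ) :
    x ^ (2 * H - 4) * overlapSqIntegral τ x = τ * x ^ (2 * H - 2) - x ^ (2 * H - 1) / 3 := by
  have h₂ : x ^ (2 * H - 4) * x ^ 2 = x ^ (2 * H - 2) :=
    rpow_mul_pow_of_add_eq hx.ne' (by push_cast; ring)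
  have h₃ : x ^ (2 * H - 4) * x ^ 3 = x ^ (2 * H - 1) :=
    rpow_mul_pow_of_add_eq hx.ne' (by push_cast; ring)
  rw [overlapSqIntegral, min_eq_right hxτ, max_eq_left hxτ]
  linear_combination τ * h₂ - h₃ / 3

lemma rpow_mul_overlapSqIntegral_of_ge {x : ℝ} (hx : 0 < x) (hτx : τ ≤ x) :
    x ^ (2 * H - 4) * overlapSqIntegral τ x =
      τ ^ 2 * x ^ (2 * H - 3) - τ ^ 3 / 3 * x ^ (2 * H - 4) := by
  have h₁ : x ^ (2 * H - 4) * x ^ 1 = x ^ (2 * H - 3) :=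
    rpow_mul_pow_of_add_eq hx.ne' (by push_cast; ring)
  rw [overlapSqIntegral, min_eq_left hτx, max_eq_right hτx]
  linear_combination τ ^ 2 * h₁

lemma integrableOn_Ioc_rpow_mul_overlapSqIntegral (hH : 1 / 2 < H) (hτ : 0 < τ) :
    IntegrableOn (fun x => x ^ (2 * H - 4) * overlapSqIntegral τ x) (Ioc 0 τ) := by
  have hint {r : ℝ} (hr : -1 < r) : IntegrableOn (fun x : ℝ => x ^ r) (Ioc 0 τ) :=
    (intervalIntegrable_iff_integrableOn_Ioc_of_le hτ.le).mp
      (intervalIntegral.intervalIntegrable_rpow' hr)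
  refine (integrableOn_congr_fun (fun x hx => ?_) measurableSet_Ioc).mpr
    (((hint (r := 2 * H - 2) (by linarith)).const_mul τ).sub
      ((hint (r := 2 * H - 1) (by linarith)).div_const 3))
  exact rpow_mul_overlapSqIntegral_of_le hx.1 hx.2

lemma integrableOn_Ioi_rpow_mul_overlapSqIntegral (hH : H < 1) (hτ : 0 < τ) :
    IntegrableOn (fun x => x ^ (2 * H - 4) * overlapSqIntegral τ x) (Ioi τ) := by
  refine (integrableOn_congr_fun (fun x hx => ?_) measurableSet_Ioi).mpr
    (((integrableOn_Ioi_rpow_of_lt (a := 2 * H - 3) (by linarith) hτ).const_mul (τ ^ 2)).sub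
      ((integrableOn_Ioi_rpow_of_lt (a := 2 * H - 4) (by linarith) hτ).const_mul (τ ^ 3 / 3)))
  exact rpow_mul_overlapSqIntegral_of_ge (hτ.trans hx) (le_of_lt hx)

lemma setIntegral_Ioc_rpow_mul_overlapSqIntegral (hH : 1 / 2 < H) (hτ : 0 < τ) :
    ∫ x in Ioc 0 τ, x ^ (2 * H - 4) * overlapSqIntegral τ x
      = τ ^ (2 * H) * (1 / (2 * H - 1) - 1 / (6 * H)) := by
  rw [setIntegral_congr_fun measurableSet_Ioc fun x hx =>
      rpow_mul_overlapSqIntegral_of_le hx.1 hx.2,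
    ← intervalIntegral.integral_of_le hτ.le, intervalIntegral.integral_sub,
    intervalIntegral.integral_const_mul, intervalIntegral.integral_div,
    integral_rpow (Or.inl (by linarith)), integral_rpow (Or.inl (by linarith)),
    Real.zero_rpow (by linarith), Real.zero_rpow (by linarith),
    show 2 * H - 2 + 1 = 2 * H - 1 by ring, show 2 * H - 1 + 1 = 2 * H by ring,
    ← rpow_mul_pow_of_add_eq (a := 2 * H - 1) (b := 2 * H) (n := 1) hτ.ne' (by push_cast; ring)]
  · have : 2 * H - 1 ≠ 0 := by linarith
    have : H ≠ 0 := by linarith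
    field_simp
    ring
  · exact (intervalIntegral.intervalIntegrable_rpow' (by linarith)).const_mul τ
  · exact (intervalIntegral.intervalIntegrable_rpow' (by linarith)).div_const 3

lemma setIntegral_Ioi_rpow_mul_overlapSqIntegral (hH : H < 1) (hτ : 0 < τ) :
    ∫ x in Ioi τ, x ^ (2 * H - 4) * overlapSqIntegral τ x
      = τ ^ (2 * H) * (1 / (2 - 2 * H) - 1 / (3 * (3 - 2 * H))) := by
  rw [setIntegral_congr_fun measurableSet_Ioi fun x hx =>
      rpow_mul_overlapSqIntegral_of_ge (hτ.trans hx) (le_of_lt hx),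
    integral_sub ((integrableOn_Ioi_rpow_of_lt (by linarith) hτ).const_mul _)
      ((integrableOn_Ioi_rpow_of_lt (by linarith) hτ).const_mul _),
    integral_const_mul, integral_const_mul,
    integral_Ioi_rpow_of_lt (by linarith) hτ, integral_Ioi_rpow_of_lt (by linarith) hτ,
    show 2 * H - 3 + 1 = 2 * H - 2 by ring, show 2 * H - 4 + 1 = 2 * H - 3 by ring,
    ← rpow_mul_pow_of_add_eq (a := 2 * H - 3) (b := 2 * H - 2) (n := 1) hτ.ne'
      (by push_cast; ring),
    ← rpow_mul_pow_of_add_eq (a := 2 * H - 3) (b := 2 * H) (n := 3) hτ.ne' (by push_cast; ring)]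
  have : H - 1 ≠ 0 := by linarith
  have : 1 - H ≠ 0 := by linarith
  have : 2 * H - 3 ≠ 0 := by linarith
  have : 3 - 2 * H ≠ 0 := by linarith
  field_simp
  ring

lemma overlapSqIntegral_zero_left {x : ℝ} (hx : 0 ≤ x) : overlapSqIntegral 0 x = 0 := by
  simp [overlapSqIntegral, hx]

lemma integrableOn_rpow_mul_overlapSqIntegral (hH : H ∈ Ioo (1 / 2) 1) (hτ : 0 ≤ τ) :
    IntegrableOn (fun x => x ^ (2 * H - 4) * overlapSqIntegral τ x) (Ioi 0) := by
  rcases hτ.eq_or_lt with rfl | hτ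
  · refine integrableOn_zero.congr_fun (fun x hx => ?_) measurableSet_Ioi
    rw [overlapSqIntegral_zero_left (le_of_lt hx), mul_zero]
  · rw [← Ioc_union_Ioi_eq_Ioi hτ.le]
    exact (integrableOn_Ioc_rpow_mul_overlapSqIntegral hH.1 hτ).union
      (integrableOn_Ioi_rpow_mul_overlapSqIntegral hH.2 hτ)

lemma inv_two_mul_CH (hH : H ∈ Ioo (1 / 2) 1) :
    (2 * CH H)⁻¹ =
      1 / (2 * H - 1) - 1 / (6 * H) + (1 / (2 - 2 * H) - 1 / (3 * (3 - 2 * H))) := by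
  obtain ⟨h₁, h₂⟩ := hH
  have : 2 * H - 1 ≠ 0 := by linarith
  have : H ≠ 0 := by linarith
  have : 1 - H ≠ 0 := by linarith
  have : 3 - 2 * H ≠ 0 := by linarith
  rw [CH]
  field_simp
  ring

lemma setIntegral_rpow_mul_overlapSqIntegral (hH : H ∈ Ioo (1 / 2) 1) (hτ : 0 ≤ τ) :
    ∫ x in Ioi 0, x ^ (2 * H - 4) * overlapSqIntegral τ x = τ ^ (2 * H) / (2 * CH H) := by
  rcases hτ.eq_or_lt with rfl | hτ
  · rw [setIntegral_congr_fun measurableSet_Ioi (g := fun _ => 0) fun x hx => by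
        rw [overlapSqIntegral_zero_left (le_of_lt hx), mul_zero],
      integral_zero, Real.zero_rpow (by linarith [hH.1]), zero_div]
  · rw [← Ioc_union_Ioi_eq_Ioi hτ.le, setIntegral_union (Ioc_disjoint_Ioi le_rfl)
      measurableSet_Ioi (integrableOn_Ioc_rpow_mul_overlapSqIntegral hH.1 hτ)
      (integrableOn_Ioi_rpow_mul_overlapSqIntegral hH.2 hτ),
      setIntegral_Ioc_rpow_mul_overlapSqIntegral hH.1 hτ,
      setIntegral_Ioi_rpow_mul_overlapSqIntegral hH.2 hτ, div_eq_mul_inv (τ ^ (2 * H)),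
      inv_two_mul_CH hH]
    ring

end OuterIntegral

lemma CH_pos {H : ℝ} (hH : H ∈ Ioo (1 / 2) 1) : 0 < CH H := by
  obtain ⟨h₁, h₂⟩ := hH
  exact mul_pos (mul_pos (mul_pos (by linarith) (by linarith)) (by linarith)) (by linarith)

end

/-- For `H ∈ (1/2,1)`, `s > 0` and `C_H = H(2H−1)(1−H)(3−2H)`, for
all `t, t' ≥ 0`, `2C_H ∫₀^∞∫_{−∞}^0 g_s(t,x,y) g_s(t',x,y) x^{2H−4} dx dy
= (t^{2H} + t'^{2H} − |t−t'|^{2H})/2`: the kernel `√(2C_H) g_s(t,x,y) x^{H−2}`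
reproduces the covariance of fractional Brownian motion with Hurst index `H`. -/
theorem stmt15 {H s : ℝ} (hH : H ∈ Set.Ioo (1 / 2 : ℝ) 1) (hs : 0 < s)
    (t t' : ℝ) (ht : 0 ≤ t) (ht' : 0 ≤ t') :
    2 * CH H * ∫ x in Set.Ioi (0 : ℝ), ∫ y in Set.Iic (0 : ℝ),
        gker s t x y * gker s t' x y * x ^ (2 * H - 4)
      = (t ^ (2 * H) + t' ^ (2 * H) - |t - t'| ^ (2 * H)) / 2 := by
  have inner : EqOn (fun x => ∫ y in Iic 0, gker s t x y * gker s t' x y * x ^ (2 * H - 4))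
      (fun x => (x ^ (2 * H - 4) * overlapSqIntegral t x
        + x ^ (2 * H - 4) * overlapSqIntegral t' x
        - x ^ (2 * H - 4) * overlapSqIntegral |t - t'| x) / 2) (Ioi 0) := fun x hx => by
    beta_reduce
    rw [integral_mul_const, setIntegral_gker_mul_gker hs.le ht ht' (le_of_lt hx)]
    ring
  have hi {τ : ℝ} (hτ : 0 ≤ τ) := integrableOn_rpow_mul_overlapSqIntegral hH hτ
  have hsum : IntegrableOn (fun x => x ^ (2 * H - 4) * overlapSqIntegral t x
      + x ^ (2 * H - 4) * overlapSqIntegral t' x) (Ioi 0) := (hi ht).add (hi ht')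
  have hd : 0 ≤ |t - t'| := abs_nonneg _
  rw [setIntegral_congr_fun measurableSet_Ioi inner, integral_div, integral_sub hsum (hi hd),
    integral_add (hi ht) (hi ht'),
    setIntegral_rpow_mul_overlapSqIntegral hH ht, setIntegral_rpow_mul_overlapSqIntegral hH ht',
    setIntegral_rpow_mul_overlapSqIntegral hH hd]
  field_simp [(CH_pos hH).ne']
end

section
/- Fix H ∈ (1/2,1) and s > 0. For 0 ≤ t ≤ 1 and a constant M < −t−s, let G(M) = {(x,y) : −t−s−y < x, M < y < −t−s} and φ̂_t(x,y) = φ_t(x,y)·1_{G(M)}(x,y), where φ_t(x,y) = g_s(t,x,y)/x^{2−H}. Then for every n > 0 and every (x₁,y₁) ∈ G(M), F_{n, φ̂_t}(x₁,y₁) ≤ √(|M|/s) · t / (4 x₁^{2−H}). -/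
open MeasureTheory ProbabilityTheory Filter Topology

/-! On `G(M)` one has `0 ≤ g_s ≤ t` and `y₂ ≤ -s`, so `φ̂_t(x₂,y₂) √x₂ ≤ t x₁^(H-3/2)` for
`x₂ > x₁`. For `y₂ ≤ 0` the exponential in `F_{n,f}` factors as
`e^{-2n x₁ (y₂-y₁)} e^{-2n|y₂|(x₂-x₁)}`. Integrating first in `x₂` gives
`√|y₂| / (2n|y₂|) = 1 / (2n√|y₂|) ≤ 1 / (2n√s)`, then in `y₂` at most `1 / (2n x₁)`; the factor
`n²` cancels, and `√(x₁|y₁|) ≤ √(x₁|M|)` finishes the estimate. -/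

open Real Set

lemma exp_neg_mul_sub (a b x : ℝ) : exp (-b * (x - a)) = exp (b * a) * exp (-b * x) := by
  rw [← exp_add]; ring_nf

lemma integrableOn_exp_neg_mul_sub_Ioi (a : ℝ) {b : ℝ} (hb : 0 < b) :
    IntegrableOn (fun x => exp (-b * (x - a))) (Ioi a) := by
  simp_rw [exp_neg_mul_sub a b]
  exact (integrableOn_exp_mul_Ioi (neg_neg_of_pos hb) a).const_mul _

lemma integral_exp_neg_mul_sub_Ioi (a : ℝ) {b : ℝ} (hb : 0 < b) :
    ∫ x in Ioi a, exp (-b * (x - a)) = b⁻¹ := by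
  simp_rw [exp_neg_mul_sub a b]
  rw [integral_const_mul, integral_exp_mul_Ioi (neg_neg_of_pos hb), neg_div_neg_eq,
    mul_div_assoc', ← exp_add, neg_mul, add_neg_cancel, exp_zero, one_div]

theorem setIntegral_prod_le_of_forall_setIntegral_le {α β : Type*} [MeasurableSpace α]
    [MeasurableSpace β] {μ : Measure α} {ν : Measure β} [SFinite μ] [SFinite ν]
    {s : Set α} {t : Set β} {f : α × β → ℝ} {g : β → ℝ} (ht : MeasurableSet t)
    (hf : IntegrableOn f (s ×ˢ t) (μ.prod ν)) (hg : IntegrableOn g t ν)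
    (hfg : ∀ y ∈ t, ∫ x in s, f (x, y) ∂μ ≤ g y) :
    ∫ q in s ×ˢ t, f q ∂(μ.prod ν) ≤ ∫ y in t, g y ∂ν := by
  rw [IntegrableOn, ← Measure.prod_restrict] at hf
  rw [← Measure.prod_restrict, integral_prod_symm f hf]
  exact setIntegral_mono_on hf.integral_prod_right hg ht hfg

lemma gker_mem_Icc {s t x y : ℝ} (ht : 0 ≤ t) (hy : y ≤ -t - s) : gker s t x y ∈ Icc 0 t := by
  have h₁ : min (t + s + y) 0 = t + s + y := min_eq_left (by linarith)
  have h₂ : min (s + y) 0 = s + y := min_eq_left (by linarith)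
  simp only [gker, hker, h₁, h₂, mem_Icc]
  constructor <;> rcases max_cases (t + s + y + x) 0 with h | h <;>
    rcases max_cases (s + y + x) 0 with h' | h' <;> linarith

noncomputable def phiHat (H s t M x y : ℝ) : ℝ :=
  if -t - s - y < x ∧ M < y ∧ y < -t - s then gker s t x y / x ^ (2 - H) else 0

section phiHat

variable {H s t M x y : ℝ}

lemma phiHat_nonneg (ht : 0 ≤ t) : 0 ≤ phiHat H s t M x y := by
  unfold phiHat
  split_ifs with h
  · exact div_nonneg (gker_mem_Icc ht h.2.2.le).1 (rpow_nonneg (by linarith) _)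
  · exact le_rfl

lemma phiHat_eq_zero_of_lt (ht : 0 ≤ t) (hy : -s < y) : phiHat H s t M x y = 0 :=
  if_neg fun h => by linarith [h.2.2]

lemma phiHat_mul_sqrt_le {x₁ : ℝ} (hH : H ≤ 3 / 2) (ht : 0 ≤ t) (hx₁ : 0 < x₁) (hx : x₁ < x) :
    phiHat H s t M x y * √x ≤ t * x₁ ^ (H - 3 / 2) := by
  have hx0 : 0 < x := hx₁.trans hx
  unfold phiHat
  split_ifs with h
  · calc gker s t x y / x ^ (2 - H) * √x ≤ t / x ^ (2 - H) * √x :=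
          mul_le_mul_of_nonneg_right
            (div_le_div_of_nonneg_right (gker_mem_Icc ht h.2.2.le).2 (rpow_nonneg hx0.le _))
            (sqrt_nonneg _)
      _ = t * x ^ (H - 3 / 2) := by
          rw [sqrt_eq_rpow, div_mul_eq_mul_div, mul_div_assoc, ← rpow_sub hx0]
          ring_nf
      _ ≤ t * x₁ ^ (H - 3 / 2) :=
          mul_le_mul_of_nonneg_left (rpow_le_rpow_of_nonpos hx₁ hx.le (by linarith)) ht
  · rw [zero_mul]; exact mul_nonneg ht (rpow_nonneg hx₁.le _)

end phiHat

noncomputable def fnfMajorant (n s x₁ y₁ : ℝ) (q : ℝ × ℝ) : ℝ :=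
  (if q.2 ≤ -s then √(-q.2) * exp (-(2 * n * -q.2) * (q.1 - x₁)) else 0) *
    exp (-(2 * n * x₁) * (q.2 - y₁))

section fnfMajorant

variable {n s x₁ y₁ : ℝ}

lemma fnfMajorant_nonneg (q : ℝ × ℝ) : 0 ≤ fnfMajorant n s x₁ y₁ q := by
  unfold fnfMajorant
  split_ifs <;> positivity

lemma measurable_fnfMajorant : Measurable (fnfMajorant n s x₁ y₁) :=
  (Measurable.ite (measurableSet_le measurable_snd measurable_const) (by fun_prop)
    measurable_const).mul (by fun_prop)

lemma integrableOn_fnfMajorant (hn : 0 < n) (hs : 0 < s) (hx₁ : 0 < x₁) :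
    IntegrableOn (fnfMajorant n s x₁ y₁) (Ioi x₁ ×ˢ Ioc y₁ 0) := by
  have hprod : IntegrableOn (fun q : ℝ × ℝ =>
      √(-y₁) * (exp (-(2 * n * s) * (q.1 - x₁)) * exp (-(2 * n * x₁) * (q.2 - y₁))))
      (Ioi x₁ ×ˢ Ioc y₁ 0) := by
    rw [IntegrableOn, Measure.volume_eq_prod, ← Measure.prod_restrict]
    have hx := integrableOn_exp_neg_mul_sub_Ioi x₁ (by positivity : 0 < 2 * n * s)
    have hy := (integrableOn_exp_neg_mul_sub_Ioi y₁ (by positivity : 0 < 2 * n * x₁)).mono_set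
      (Ioc_subset_Ioi_self : Ioc y₁ 0 ⊆ _)
    exact (hx.mul_prod hy).const_mul _
  refine hprod.mono' measurable_fnfMajorant.aestronglyMeasurable ?_
  filter_upwards [ae_restrict_mem (measurableSet_Ioi.prod measurableSet_Ioc)]
    with q ⟨hx, hy₁, _⟩
  rw [Real.norm_of_nonneg (fnfMajorant_nonneg _), fnfMajorant, ← mul_assoc]
  gcongr
  split_ifs with hys
  · have hx' : x₁ < q.1 := hx
    gcongr
    linarith
  · positivity

lemma setIntegral_fnfMajorant_le (hn : 0 < n) (hs : 0 < s) (y : ℝ) :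
    ∫ x in Ioi x₁, fnfMajorant n s x₁ y₁ (x, y) ≤
      (2 * n * √s)⁻¹ * exp (-(2 * n * x₁) * (y - y₁)) := by
  by_cases hys : y ≤ -s
  · simp only [fnfMajorant, hys, if_true]
    have hy : 0 < -y := by linarith
    rw [integral_mul_const, integral_const_mul,
      integral_exp_neg_mul_sub_Ioi x₁ (by positivity : 0 < 2 * n * -y)]
    gcongr
    calc √(-y) * (2 * n * -y)⁻¹ = (2 * n * √(-y))⁻¹ := by
          nth_rewrite 2 [← mul_self_sqrt hy.le]; field_simp
      _ ≤ (2 * n * √s)⁻¹ := by gcongr; linarith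
  · simp only [fnfMajorant, hys, if_false, zero_mul, integral_zero]
    positivity

lemma integral_fnfMajorant_le (hn : 0 < n) (hs : 0 < s) (hx₁ : 0 < x₁) :
    ∫ q in Ioi x₁ ×ˢ Ioc y₁ 0, fnfMajorant n s x₁ y₁ q ≤ (2 * n * √s)⁻¹ * (2 * n * x₁)⁻¹ := by
  have hexp := integrableOn_exp_neg_mul_sub_Ioi y₁ (by positivity : 0 < 2 * n * x₁)
  calc ∫ q in Ioi x₁ ×ˢ Ioc y₁ 0, fnfMajorant n s x₁ y₁ q
      ≤ ∫ y in Ioc y₁ 0, (2 * n * √s)⁻¹ * exp (-(2 * n * x₁) * (y - y₁)) :=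
        setIntegral_prod_le_of_forall_setIntegral_le measurableSet_Ioc
          (integrableOn_fnfMajorant hn hs hx₁) ((hexp.mono_set Ioc_subset_Ioi_self).const_mul _)
          fun y _ => setIntegral_fnfMajorant_le hn hs y
    _ ≤ ∫ y in Ioi y₁, (2 * n * √s)⁻¹ * exp (-(2 * n * x₁) * (y - y₁)) :=
        setIntegral_mono_set (hexp.const_mul _) (ae_of_all _ fun _ => by positivity)
          Ioc_subset_Ioi_self.eventuallyLE
    _ = (2 * n * √s)⁻¹ * (2 * n * x₁)⁻¹ := by
        rw [integral_const_mul, integral_exp_neg_mul_sub_Ioi y₁ (by positivity)]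

end fnfMajorant

section Fnf

variable {n s c x₁ y₁ : ℝ} {f : ℝ → ℝ → ℝ}

lemma Fnf_integrand_le_mul_fnfMajorant (hs : 0 < s) (hf_supp : ∀ x y, -s < y → f x y = 0)
    (hf_le : ∀ x, x₁ < x → ∀ y, f x y * √x ≤ c) {q : ℝ × ℝ} (hq : x₁ < q.1) :
    f q.1 q.2 * √(q.1 * |q.2|) * exp (-2 * n * (x₁ * (q.2 - y₁) - (q.1 - x₁) * q.2)) ≤
      c * fnfMajorant n s x₁ y₁ q := by
  obtain ⟨x, y⟩ := q
  by_cases hys : y ≤ -s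
  · have hy : y < 0 := by linarith
    have hexp : exp (-2 * n * (x₁ * (y - y₁) - (x - x₁) * y)) =
        exp (-(2 * n * -y) * (x - x₁)) * exp (-(2 * n * x₁) * (y - y₁)) := by
      rw [← exp_add]; ring_nf
    simp only [fnfMajorant, hys, if_true]
    rw [abs_of_neg hy, sqrt_mul' x (neg_nonneg.2 hy.le), hexp]
    calc f x y * (√x * √(-y)) * (exp (-(2 * n * -y) * (x - x₁)) * exp (-(2 * n * x₁) * (y - y₁)))
        = f x y * √x * (√(-y) * exp (-(2 * n * -y) * (x - x₁)) *
            exp (-(2 * n * x₁) * (y - y₁))) := by ring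
      _ ≤ c * (√(-y) * exp (-(2 * n * -y) * (x - x₁)) * exp (-(2 * n * x₁) * (y - y₁))) := by
        gcongr
        exact hf_le x hq y
  · simp [fnfMajorant, hys, hf_supp x y (not_le.1 hys)]

theorem Fnf_le_of_mul_sqrt_le (hn : 0 < n) (hs : 0 < s) (hx₁ : 0 < x₁)
    (hf_nonneg : ∀ x y, 0 ≤ f x y) (hf_supp : ∀ x y, -s < y → f x y = 0)
    (hf_le : ∀ x, x₁ < x → ∀ y, f x y * √x ≤ c) :
    Fnf n f x₁ y₁ ≤ √(x₁ * |y₁|) * c / (4 * x₁ * √s) := by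
  have hc : 0 ≤ c :=
    (mul_nonneg (hf_nonneg _ 0) (sqrt_nonneg _)).trans (hf_le (x₁ + 1) (by linarith) 0)
  have hS : MeasurableSet (Ioi x₁ ×ˢ Ioc y₁ 0) := measurableSet_Ioi.prod measurableSet_Ioc
  have hint : ∫ q in Ioi x₁ ×ˢ Ioc y₁ 0, f q.1 q.2 * √(q.1 * |q.2|) *
        exp (-2 * n * (x₁ * (q.2 - y₁) - (q.1 - x₁) * q.2)) ≤
      c * ((2 * n * √s)⁻¹ * (2 * n * x₁)⁻¹) :=
    calc _ ≤ ∫ q in Ioi x₁ ×ˢ Ioc y₁ 0, c * fnfMajorant n s x₁ y₁ q :=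
          integral_mono_of_nonneg
            (ae_of_all _ fun q => mul_nonneg (mul_nonneg (hf_nonneg _ _) (sqrt_nonneg _))
              (exp_pos _).le)
            ((integrableOn_fnfMajorant hn hs hx₁).const_mul c)
            ((ae_restrict_mem hS).mono fun q hq =>
              Fnf_integrand_le_mul_fnfMajorant hs hf_supp hf_le hq.1)
      _ = c * ∫ q in Ioi x₁ ×ˢ Ioc y₁ 0, fnfMajorant n s x₁ y₁ q := integral_const_mul _ _
      _ ≤ c * ((2 * n * √s)⁻¹ * (2 * n * x₁)⁻¹) :=
          mul_le_mul_of_nonneg_left (integral_fnfMajorant_le hn hs hx₁) hc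
  calc Fnf n f x₁ y₁ = √(x₁ * |y₁|) * n ^ 2 * ∫ q in Ioi x₁ ×ˢ Ioc y₁ 0,
        f q.1 q.2 * √(q.1 * |q.2|) * exp (-2 * n * (x₁ * (q.2 - y₁) - (q.1 - x₁) * q.2)) := rfl
    _ ≤ √(x₁ * |y₁|) * n ^ 2 * (c * ((2 * n * √s)⁻¹ * (2 * n * x₁)⁻¹)) := by gcongr
    _ = √(x₁ * |y₁|) * c / (4 * x₁ * √s) := by field_simp; ring

end Fnf

theorem stmt16_general {H s : ℝ} (hH : H ∈ Set.Ioo (1 / 2 : ℝ) 1) (hs : 0 < s)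
    (t M : ℝ) (ht : t ∈ Set.Icc (0 : ℝ) 1)
    {n : ℝ} (hn : 0 < n) (x₁ y₁ : ℝ)
    (hmem : -t - s - y₁ < x₁ ∧ M < y₁ ∧ y₁ < -t - s) :
    Fnf n (fun x y =>
        if -t - s - y < x ∧ M < y ∧ y < -t - s then gker s t x y / x ^ (2 - H) else 0)
      x₁ y₁
      ≤ Real.sqrt (|M| / s) * t / (4 * x₁ ^ (2 - H)) := by
  obtain ⟨hxy, hMy, hy⟩ := hmem
  have ht₀ : 0 ≤ t := ht.1
  have hx₁ : 0 < x₁ := by linarith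
  have hy₁M : |y₁| ≤ |M| := abs_le_abs_of_nonpos (by linarith) hMy.le
  calc Fnf n (phiHat H s t M) x₁ y₁ ≤ √(x₁ * |y₁|) * (t * x₁ ^ (H - 3 / 2)) / (4 * x₁ * √s) :=
        Fnf_le_of_mul_sqrt_le hn hs hx₁ (fun _ _ => phiHat_nonneg ht₀)
          (fun _ _ => phiHat_eq_zero_of_lt ht₀)
          (fun _ hx _ => phiHat_mul_sqrt_le (by linarith [hH.2]) ht₀ hx₁ hx)
    _ ≤ √(x₁ * |M|) * (t * x₁ ^ (H - 3 / 2)) / (4 * x₁ * √s) := by gcongr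
    _ = √(|M| / s) * t / (4 * x₁ ^ (2 - H)) := by
        have hpow : √x₁ * x₁ ^ (H - 3 / 2) * x₁ ^ (2 - H) = x₁ := by
          rw [sqrt_eq_rpow, ← rpow_add hx₁, ← rpow_add hx₁,
            show (1 / 2 + (H - 3 / 2) + (2 - H) : ℝ) = 1 by ring, rpow_one]
        rw [sqrt_mul hx₁.le, sqrt_div (abs_nonneg M)]
        generalize x₁ ^ (H - 3 / 2) = a at hpow ⊢
        field_simp
        linear_combination √|M| * t * hpow

/-- For `H ∈ (1/2,1)`, `s > 0`, `t ∈ [0,1]`, `M < −t−s`,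
`φ̂_t = φ_t · 1_{G(M)}` with `G(M) = {−t−s−y < x, M < y < −t−s}`, for every `n > 0`
and every `(x₁,y₁) ∈ G(M)`, `F_{n,φ̂_t}(x₁,y₁) ≤ √(|M|/s) · t/(4 x₁^{2−H})`. -/
theorem stmt16 {H s : ℝ} (hH : H ∈ Set.Ioo (1 / 2 : ℝ) 1) (hs : 0 < s)
    (t M : ℝ) (ht : t ∈ Set.Icc (0 : ℝ) 1) (hM : M < -t - s)
    {n : ℝ} (hn : 0 < n) (x₁ y₁ : ℝ)
    (hmem : -t - s - y₁ < x₁ ∧ M < y₁ ∧ y₁ < -t - s) :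
    Fnf n (fun x y =>
        if -t - s - y < x ∧ M < y ∧ y < -t - s then gker s t x y / x ^ (2 - H) else 0)
      x₁ y₁
      ≤ Real.sqrt (|M| / s) * t / (4 * x₁ ^ (2 - H)) :=
  stmt16_general hH hs t M ht hn x₁ y₁ hmem
end
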